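/- arXiv:2309.06314 — 6 statements merged into one kernel-verified Lean document; each statement's English description precedes it below -/
import Mathlib

section
/- Let R be a commutative ring, V a free R-module of rank n, and τ ∈ End_R(V) cyclic. Then the characteristic polynomial P_τ generates the annihilator ideal {f ∈ R[X] : f(τ) = 0}. -/
/-!
If `v` is a cyclic vector of `τ` and `P` is a monic polynomial of degree `n = rank V` with
`P(τ) = 0`, then reducing modulo `P` shows that `p ↦ p(τ) v` maps the polynomials of degree `< n`,
a free module of rank `n`, onto `V ≅ Rⁿ`. A surjection between free modules of the same finite
rank over a commutative ring is injective, so `r(τ) v = 0` with `deg r < n` forces `r = 0`.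
Since `f(τ)` commutes with every `p(τ)`, `f(τ) = 0` as soon as `f(τ) v = 0`, and taking
`r = f mod P` gives `P ∣ f`. Cayley–Hamilton provides `P = P_τ`.
-/

open Polynomial

namespace Polynomial

theorem modByMonic_mem_degreeLT {R : Type*} [CommRing R] {P : R[X]} (hP : P.Monic) (f : R[X]) :
    f %ₘ P ∈ degreeLT R P.natDegree := by
  nontriviality R
  rw [mem_degreeLT, ← degree_eq_natDegree hP.ne_zero]
  exact degree_modByMonic_lt f hP

end Polynomial

namespace Module.End

variable {R M : Type*} [CommRing R] [AddCommGroup M] [Module R M] {τ : Module.End R M} {v : M}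

noncomputable def aevalApply (τ : Module.End R M) (v : M) : R[X] →ₗ[R] M :=
  LinearMap.applyₗ v ∘ₗ (aeval τ).toLinearMap

@[simp]
theorem aevalApply_apply (p : R[X]) : aevalApply τ v p = aeval τ p v := rfl

theorem aeval_eq_zero_iff_aeval_apply_eq_zero (hv : ∀ w : M, ∃ p : R[X], aeval τ p v = w)
    (f : R[X]) : aeval τ f = 0 ↔ aeval τ f v = 0 := by
  refine ⟨fun hf => by rw [hf, LinearMap.zero_apply], fun hf => LinearMap.ext fun w => ?_⟩
  obtain ⟨p, rfl⟩ := hv w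
  rw [← Module.End.mul_apply, ← map_mul, mul_comm, map_mul, Module.End.mul_apply, hf, map_zero,
    LinearMap.zero_apply]

variable {P : R[X]}

theorem surjective_aevalApply_degreeLT (hv : ∀ w : M, ∃ p : R[X], aeval τ p v = w)
    (hP : P.Monic) (hτP : aeval τ P = 0) :
    Function.Surjective ((aevalApply τ v).domRestrict (degreeLT R P.natDegree)) := by
  intro w
  obtain ⟨p, rfl⟩ := hv w
  exact ⟨⟨p %ₘ P, modByMonic_mem_degreeLT hP p⟩,
    by simp [aeval_modByMonic_eq_self_of_root hτP]⟩

theorem injective_aevalApply_degreeLT (hv : ∀ w : M, ∃ p : R[X], aeval τ p v = w)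
    (hP : P.Monic) (hτP : aeval τ P = 0) (e : M ≃ₗ[R] (Fin P.natDegree → R)) :
    Function.Injective ((aevalApply τ v).domRestrict (degreeLT R P.natDegree)) :=
  have : Module.Finite R M := Module.Finite.equiv e.symm
  OrzechProperty.injective_of_surjective_of_injective
    (e.symm.toLinearMap ∘ₗ (degreeLTEquiv R P.natDegree).toLinearMap) _
    (e.symm.injective.comp (degreeLTEquiv R P.natDegree).injective)
    (surjective_aevalApply_degreeLT hv hP hτP)

theorem aeval_eq_zero_iff_dvd_of_cyclic (hv : ∀ w : M, ∃ p : R[X], aeval τ p v = w)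
    (hP : P.Monic) (hτP : aeval τ P = 0) (e : M ≃ₗ[R] (Fin P.natDegree → R)) (f : R[X]) :
    aeval τ f = 0 ↔ P ∣ f := by
  have hinj := injective_aevalApply_degreeLT hv hP hτP e
  rw [aeval_eq_zero_iff_aeval_apply_eq_zero hv, ← aeval_modByMonic_eq_self_of_root hτP,
    ← modByMonic_eq_zero_iff_dvd hP]
  simpa using map_eq_zero_iff _ hinj (x := ⟨f %ₘ P, modByMonic_mem_degreeLT hP f⟩)

end Module.End

/-- Let `R` be a commutative ring and `τ` a cyclic endomorphism of a free `R`-module of rank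
`n` (realized as a matrix).  Then the characteristic polynomial `P_τ` generates the annihilator
ideal `{f ∈ R[X] : f(τ) = 0}`. -/
theorem stmt_3 {R : Type*} [CommRing R] (n : ℕ) (τ : Matrix (Fin n) (Fin n) R)
    (h : ∃ v : Fin n → R, ∀ w : Fin n → R,
      ∃ p : Polynomial R, (Polynomial.aeval τ p).mulVec v = w) :
    ∀ f : Polynomial R, Polynomial.aeval τ f = 0 ↔ τ.charpoly ∣ f := by
  nontriviality R
  obtain ⟨v, hv⟩ := h
  have hτ' (p : R[X]) : aeval (Matrix.toLinAlgEquiv' τ) p = Matrix.toLinAlgEquiv' (aeval τ p) :=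
    aeval_algHom_apply (Matrix.toLinAlgEquiv' : _ ≃ₐ[R] _) τ p
  have hcyclic (w : Fin n → R) : ∃ p : R[X], aeval (Matrix.toLinAlgEquiv' τ) p v = w := by
    obtain ⟨p, hp⟩ := hv w
    exact ⟨p, by rw [hτ', Matrix.toLinAlgEquiv'_apply]; exact hp⟩
  have hcharpoly : aeval (Matrix.toLinAlgEquiv' τ) τ.charpoly = 0 := by
    rw [hτ', Matrix.aeval_self_charpoly, map_zero]
  intro f
  rw [← map_eq_zero_iff _ (Matrix.toLinAlgEquiv' (R := R)).injective, ← hτ']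
  exact Module.End.aeval_eq_zero_iff_dvd_of_cyclic hcyclic τ.charpoly_monic hcharpoly
    (LinearEquiv.funCongrLeft R R (finCongr (by simp))) f
end

section
/- Let R be a commutative ring and P, P_H ∈ R[X] monic polynomials of degrees n+1 and n respectively. Then there exists a matrix τ ∈ Mat_{n+1}(R) whose characteristic polynomial is P and such that the upper-left n×n block τ_H has characteristic polynomial P_H. -/
open Polynomial Matrix Finset

section aux

variable {S : Type*} [CommRing S]

/-- bidiagonal matrix with `x` on diagonal, `-1` on superdiagonal, arbitrary last row. -/
private def bd (m : ℕ) (x : S) (c : Fin (m+1) → S) : Matrix (Fin (m+1)) (Fin (m+1)) S :=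
  Matrix.of fun i j => if i = Fin.last m then c j
    else if j = i then x else if (j:ℕ) = (i:ℕ)+1 then -1 else 0

private lemma bd_det (m : ℕ) (x : S) (c : Fin (m+1) → S) :
    (bd m x c).det = ∑ j : Fin (m+1), c j * x^(j:ℕ) := by
  induction m with
  | zero =>
    rw [Matrix.det_fin_one]
    simp [bd]
  | succ m ih =>
    rw [Matrix.det_succ_column _ (Fin.last (m+1)), Fin.sum_univ_castSucc]
    have hzero : ∀ b : Fin (m+1), b ≠ Fin.last m →
        (bd (m+1) x c) b.castSucc (Fin.last (m+1)) = 0 := by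
      intro b hb
      have hb' : (b : ℕ) ≠ m := fun h => hb (Fin.ext (by simpa using h))
      have h1 : b.castSucc ≠ Fin.last (m+1) := (Fin.castSucc_lt_last b).ne
      have h2 : Fin.last (m+1) ≠ b.castSucc := Ne.symm h1
      have h3 : ((Fin.last (m+1) : Fin (m+2)) : ℕ) ≠ ((b.castSucc : Fin (m+2)) : ℕ) + 1 := by
        simp only [Fin.val_last, Fin.coe_castSucc]
        omega
      simp only [bd, Matrix.of_apply, if_neg h1, if_neg h2, if_neg h3]
    rw [Finset.sum_eq_single (Fin.last m)]
    · -- two remaining terms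
      have hminor1 : ((bd (m+1) x c).submatrix (Fin.last m).castSucc.succAbove
          (Fin.last (m+1)).succAbove) = bd m x (fun j => c j.castSucc) := by
        ext i j
        rw [Fin.succAbove_last]
        by_cases hi : i = Fin.last m
        · subst hi
          have h1 : (Fin.last m).castSucc.succAbove (Fin.last m) = Fin.last (m+1) := by
            rw [Fin.succAbove, if_neg (lt_irrefl _)]
            exact Fin.succ_last m
          simp [bd, h1]
        · have hlt : i < Fin.last m := lt_of_le_of_ne (Fin.le_last i) hi
          have h1 : (Fin.last m).castSucc.succAbove i = i.castSucc := by
            rw [Fin.succAbove, if_pos (by exact_mod_cast Fin.castSucc_lt_castSucc_iff.2 hlt)]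
          have h2 : i.castSucc ≠ Fin.last (m+1) := (Fin.castSucc_lt_last i).ne
          have h3 : (j.castSucc = i.castSucc) ↔ (j = i) := Fin.castSucc_inj
          simp only [Matrix.submatrix_apply, h1, bd, Matrix.of_apply, if_neg h2, if_neg hi,
            Fin.castSucc_inj, Fin.coe_castSucc]
      have hminor2 : ((bd (m+1) x c).submatrix (Fin.last (m+1)).succAbove
          (Fin.last (m+1)).succAbove).det = x^(m+1) := by
        rw [Fin.succAbove_last]
        rw [Matrix.det_of_upperTriangular]
        · have : ∀ i : Fin (m+1),
              (bd (m+1) x c).submatrix Fin.castSucc Fin.castSucc i i = x := by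
            intro i
            have h2 : i.castSucc ≠ Fin.last (m+1) := (Fin.castSucc_lt_last i).ne
            simp [bd, h2]
          rw [Finset.prod_congr rfl (fun i _ => this i)]
          simp
        · intro i j hij
          have hji : (j : ℕ) < (i : ℕ) := hij
          have h2 : i.castSucc ≠ Fin.last (m+1) := (Fin.castSucc_lt_last i).ne
          have h3 : j ≠ i := Fin.ne_of_lt hij
          have h4 : (j : ℕ) ≠ (i : ℕ) + 1 := by omega
          simp only [Matrix.submatrix_apply, bd, Matrix.of_apply, if_neg h2, Fin.castSucc_inj,
            Fin.coe_castSucc, if_neg h3, if_neg h4]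
      have hentry : (bd (m+1) x c) (Fin.last m).castSucc (Fin.last (m+1)) = -1 := by
        have h2 : (Fin.last m).castSucc ≠ Fin.last (m+1) := (Fin.castSucc_lt_last _).ne
        have h3 : Fin.last (m+1) ≠ (Fin.last m).castSucc := fun h => h2 h.symm
        have h4 : ((Fin.last (m+1) : Fin (m+2)) : ℕ) = ((Fin.last m).castSucc : ℕ) + 1 := by
          simp
        simp [bd, h2, h3, h4]
      have hentry2 : (bd (m+1) x c) (Fin.last (m+1)) (Fin.last (m+1)) = c (Fin.last (m+1)) := by
        simp [bd]
      rw [hminor1, hentry, hentry2, ih, hminor2]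
      have hsign : (-1 : S) ^ (m + (m+1)) = -1 := Odd.neg_one_pow ⟨m, by ring⟩
      have hsign2 : (-1 : S) ^ ((m+1) + (m+1)) = 1 := Even.neg_one_pow ⟨m+1, by ring⟩
      simp only [Fin.sum_univ_castSucc, Fin.coe_castSucc, Fin.val_last, hsign, hsign2]
      ring
    · intro b _ hb
      rw [hzero b hb]
      ring
    · intro h
      exact absurd (Finset.mem_univ _) h

private lemma charmatrix_submatrix_castSucc {m : ℕ} (M : Matrix (Fin (m+1)) (Fin (m+1)) S) :
    (charmatrix M).submatrix Fin.castSucc Fin.castSucc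
      = charmatrix (M.submatrix Fin.castSucc Fin.castSucc) := by
  ext i j
  by_cases h : i = j
  · subst h
    simp [charmatrix_apply_eq]
  · rw [Matrix.submatrix_apply, charmatrix_apply_ne _ _ _ (fun hc => h (Fin.castSucc_inj.1 hc)),
      charmatrix_apply_ne _ _ _ h, Matrix.submatrix_apply]

private lemma sum_fin_C_mul_X_pow {p : S[X]} {N : ℕ} (h : p.degree < N) :
    ∑ j : Fin N, C (p.coeff j) * X ^ (j : ℕ) = p := by
  rw [Polynomial.sum_fin (fun n a => C a * X ^ n) (by simp) h, Polynomial.sum_C_mul_X_pow_eq]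

end aux

/-- Let `R` be a commutative ring and `P, P_H ∈ R[X]` monic polynomials of degrees `n+1` and
`n` respectively.  Then there exists `τ ∈ Mat_{n+1}(R)` whose characteristic polynomial is `P`
and whose upper-left `n × n` block has characteristic polynomial `P_H`. -/
theorem stmt_9 {R : Type*} [CommRing R] (n : ℕ) (P PH : Polynomial R)
    (hP : P.Monic) (hPH : PH.Monic)
    (hdP : P.natDegree = n + 1) (hdPH : PH.natDegree = n) :
    ∃ τ : Matrix (Fin (n + 1)) (Fin (n + 1)) R,
      τ.charpoly = P ∧
      (τ.submatrix Fin.castSucc Fin.castSucc).charpoly = PH := by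
  rcases n with _ | m
  · -- n = 0
    refine ⟨Matrix.of fun _ _ => -P.coeff 0, ?_, ?_⟩
    · have hP1 : P = X + C (P.coeff 0) := hP.eq_X_add_C hdP
      rw [Matrix.charpoly, Matrix.det_fin_one, charmatrix_apply_eq]
      rw [Matrix.of_apply, map_neg, sub_neg_eq_add]
      exact hP1.symm
    · have hPH1 : PH = 1 := hPH.natDegree_eq_zero.mp hdPH
      rw [hPH1, Matrix.charpoly, Matrix.det_fin_zero]
  · -- n = m + 1
    set d : R := PH.coeff m - P.coeff (m+1) with hd
    set r : Polynomial R := (X - C d) * PH - P with hr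
    have hPHtop : PH.coeff (m+1) = 1 := by
      have := hPH.coeff_natDegree
      rwa [hdPH] at this
    have hPtop : P.coeff (m+2) = 1 := by
      have := hP.coeff_natDegree
      rwa [hdP] at this
    have hrcoeff : ∀ k : ℕ, r.coeff (k+1) = PH.coeff k - d * PH.coeff (k+1) - P.coeff (k+1) := by
      intro k
      rw [hr]
      rw [coeff_sub, sub_mul, coeff_sub, coeff_X_mul, coeff_C_mul]
    have hrdeg : r.degree < ((m+1 : ℕ) : WithBot ℕ) := by
      rw [Polynomial.degree_lt_iff_coeff_zero]
      intro k hk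
      have hk' : m + 1 ≤ k := by exact_mod_cast hk
      obtain ⟨k, rfl⟩ : ∃ k', k = k' + 1 := ⟨k-1, by omega⟩
      rw [hrcoeff k]
      by_cases h1 : k = m
      · subst h1
        rw [hPHtop, hd]
        ring
      · have h2 : m + 1 ≤ k := by omega
        by_cases h3 : k = m + 1
        · subst h3
          rw [hPHtop, hPtop, coeff_eq_zero_of_natDegree_lt (by omega : PH.natDegree < m + 2)]
          ring
        · have h4 : m + 2 ≤ k := by omega
          rw [coeff_eq_zero_of_natDegree_lt (by omega : PH.natDegree < k),
            coeff_eq_zero_of_natDegree_lt (by omega : PH.natDegree < k + 1),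
            coeff_eq_zero_of_natDegree_lt (by omega : P.natDegree < k + 1)]
          ring
    set τ : Matrix (Fin (m+2)) (Fin (m+2)) R := Matrix.of fun i j =>
      if i = Fin.last (m+1) then (if j = Fin.last (m+1) then d else r.coeff j)
      else (if (j:ℕ) = (i:ℕ)+1 then 1 else 0) +
        (if (i:ℕ) = m ∧ ¬ j = Fin.last (m+1) then -PH.coeff j else 0) with hτ
    have hsub : charmatrix (τ.submatrix Fin.castSucc Fin.castSucc)
        = bd m X (fun j => C (PH.coeff j) + if j = Fin.last m then X else 0) := by
      ext i j : 1
      have hile : i.castSucc ≠ Fin.last (m+1) := (Fin.castSucc_lt_last i).ne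
      have hjle : j.castSucc ≠ Fin.last (m+1) := (Fin.castSucc_lt_last j).ne
      have hjs : ¬ ((j.castSucc : ℕ) = (i.castSucc : ℕ) + 1 ∧ True) ∨ True := Or.inr trivial
      by_cases hij : i = j
      · subst hij
        rw [charmatrix_apply_eq, Matrix.submatrix_apply]
        have hns : ¬ ((i.castSucc : ℕ) = (i.castSucc : ℕ) + 1) := by omega
        by_cases hi : i = Fin.last m
        · subst hi
          have him : ((Fin.last m).castSucc : ℕ) = m := by simp
          rw [show τ (Fin.last m).castSucc (Fin.last m).castSucc = -PH.coeff m by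
            simp only [hτ, Matrix.of_apply, if_neg hile, if_neg hns,
              if_pos (And.intro him hile)]
            simp]
          rw [map_neg, sub_neg_eq_add]
          simp [bd, add_comm]
        · have him : ¬ ((i.castSucc : ℕ) = m) := by
            simp only [Fin.coe_castSucc]
            intro h
            exact hi (Fin.ext (by simpa using h))
          have him' : ¬ ((i.castSucc : ℕ) = m ∧ ¬ i.castSucc = Fin.last (m+1)) :=
            fun h => him h.1
          simp only [hτ, Matrix.of_apply, if_neg hile, if_neg hns, if_neg him',
            bd, if_neg hi, if_pos rfl]
          simp
      · rw [charmatrix_apply_ne _ _ _ hij, Matrix.submatrix_apply]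
        by_cases hi : i = Fin.last m
        · subst hi
          have hj : j ≠ Fin.last m := fun h => hij h.symm
          have hns : ¬ ((j.castSucc : ℕ) = ((Fin.last m).castSucc : ℕ) + 1) := by
            simp only [Fin.coe_castSucc, Fin.val_last]
            omega
          have him : ((Fin.last m).castSucc : ℕ) = m := by simp
          simp only [hτ, Matrix.of_apply, if_neg hile, if_neg hns,
            if_pos (And.intro him hjle), bd, if_pos rfl, if_neg hj]
          simp
        · have him2 : ¬ ((i : ℕ) = m) := fun h =>
            hi (Fin.ext (by simp only [Fin.val_last]; omega))
          simp only [hτ, Matrix.of_apply, if_neg hile, bd, if_neg hi,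
            if_neg (Ne.symm hij), Fin.coe_castSucc]
          by_cases hs : (j : ℕ) = (i : ℕ) + 1
          · simp [hs, him2, Ne.symm hij]
          · simp [hs, him2, Ne.symm hij]
    have hPHsum : PH = ∑ j : Fin (m+2), C (PH.coeff j) * X ^ (j : ℕ) := by
      refine (sum_fin_C_mul_X_pow ?_).symm
      rw [Polynomial.degree_lt_iff_coeff_zero]
      intro k hk
      have hk' : m + 2 ≤ k := by exact_mod_cast hk
      exact coeff_eq_zero_of_natDegree_lt (by rw [hdPH]; omega)
    have hB : (charmatrix (τ.submatrix Fin.castSucc Fin.castSucc)).det = PH := by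
      rw [hsub, bd_det]
      conv_rhs => rw [hPHsum]
      rw [Fin.sum_univ_castSucc (f := fun j : Fin (m+2) => C (PH.coeff j) * X ^ (j : ℕ)),
        Fin.sum_univ_castSucc
          (f := fun j : Fin (m+1) => (C (PH.coeff j) + if j = Fin.last m then X else 0) * X ^ (j : ℕ))]
      have h1 : ∀ i : Fin m,
          (C (PH.coeff i.castSucc) + if i.castSucc = Fin.last m then X else 0)
            * X ^ ((i.castSucc : Fin (m+1)) : ℕ)
          = C (PH.coeff ((i.castSucc : Fin (m+1)).castSucc)) * X ^ (((i.castSucc : Fin (m+1)).castSucc : Fin (m+2)) : ℕ) := by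
        intro i
        rw [if_neg (Fin.castSucc_lt_last i).ne]
        simp
      rw [Finset.sum_congr rfl (fun i _ => h1 i)]
      rw [Fin.sum_univ_castSucc (f := fun j : Fin (m+1) => C (PH.coeff j.castSucc) * X ^ ((j.castSucc : Fin (m+2)) : ℕ))]
      simp only [if_pos rfl, Fin.val_last, Fin.coe_castSucc, hPHtop, Polynomial.C_1, if_true]
      ring
    refine ⟨τ, ?_, ?_⟩
    · -- charpoly τ = P
      rw [Matrix.charpoly, Matrix.det_succ_column _ (Fin.last (m+1)), Fin.sum_univ_castSucc]
      have hzero : ∀ b : Fin (m+1), b ≠ Fin.last m →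
          charmatrix τ b.castSucc (Fin.last (m+1)) = 0 := by
        intro b hb
        have h1 : b.castSucc ≠ Fin.last (m+1) := (Fin.castSucc_lt_last b).ne
        rw [charmatrix_apply_ne _ _ _ h1]
        have h3 : ¬ (((Fin.last (m+1) : Fin (m+2)) : ℕ) = (b.castSucc : ℕ) + 1) := by
          simp only [Fin.val_last, Fin.coe_castSucc]
          intro h
          exact hb (Fin.ext (by simp only [Fin.val_last]; omega))
        have h4 : ¬ ((b.castSucc : ℕ) = m ∧ ¬ (Fin.last (m+1) : Fin (m+2)) = Fin.last (m+1)) :=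
          fun h => h.2 rfl
        simp only [hτ, Matrix.of_apply, if_neg h1, if_neg h3, if_neg h4]
        simp
      rw [Finset.sum_eq_single (Fin.last m)]
      · -- two terms
        have hentry : charmatrix τ (Fin.last m).castSucc (Fin.last (m+1)) = -1 := by
          have h1 : (Fin.last m).castSucc ≠ Fin.last (m+1) := (Fin.castSucc_lt_last _).ne
          rw [charmatrix_apply_ne _ _ _ h1]
          have h3 : ((Fin.last (m+1) : Fin (m+2)) : ℕ) = ((Fin.last m).castSucc : ℕ) + 1 := by
            simp
          have h4 : ¬ (((Fin.last m).castSucc : ℕ) = m ∧ ¬ (Fin.last (m+1) : Fin (m+2)) = Fin.last (m+1)) :=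
            fun h => h.2 rfl
          simp only [hτ, Matrix.of_apply, if_neg h1, if_pos h3, if_neg h4]
          simp
        have hentry2 : charmatrix τ (Fin.last (m+1)) (Fin.last (m+1)) = X - C d := by
          rw [charmatrix_apply_eq]
          simp [hτ]
        have hminor1 : (charmatrix τ).submatrix (Fin.last m).castSucc.succAbove
            (Fin.last (m+1)).succAbove = bd m X (fun j => -C (r.coeff j)) := by
          ext i j : 1
          rw [Fin.succAbove_last]
          by_cases hi : i = Fin.last m
          · subst hi
            have h1 : (Fin.last m).castSucc.succAbove (Fin.last m) = Fin.last (m+1) := by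
              rw [Fin.succAbove, if_neg (lt_irrefl _)]
              exact Fin.succ_last m
            rw [Matrix.submatrix_apply, h1,
              charmatrix_apply_ne _ _ _ (Ne.symm (Fin.castSucc_lt_last j).ne)]
            simp only [hτ, Matrix.of_apply, if_pos rfl,
              if_neg (Fin.castSucc_lt_last j).ne, bd, if_pos rfl]
            simp
          · have hlt : i < Fin.last m := lt_of_le_of_ne (Fin.le_last i) hi
            have h1 : (Fin.last m).castSucc.succAbove i = i.castSucc := by
              rw [Fin.succAbove, if_pos (by exact_mod_cast Fin.castSucc_lt_castSucc_iff.2 hlt)]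
            have h2 : i.castSucc ≠ Fin.last (m+1) := (Fin.castSucc_lt_last i).ne
            have him2 : ¬ ((i : ℕ) = m) := fun h =>
              hi (Fin.ext (by simp only [Fin.val_last]; omega))
            rw [Matrix.submatrix_apply, h1]
            by_cases hij : i = j
            · subst hij
              rw [charmatrix_apply_eq]
              have hns : ¬ ((i.castSucc : ℕ) = (i.castSucc : ℕ) + 1) := by omega
              simp only [hτ, Matrix.of_apply, if_neg h2, if_neg hns, bd,
                if_neg hi, if_pos rfl]
              simp [him2]
            · rw [charmatrix_apply_ne _ _ _ (fun h => hij (Fin.castSucc_inj.1 h))]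
              simp only [hτ, Matrix.of_apply, if_neg h2, bd, if_neg hi,
                if_neg (Ne.symm hij), Fin.coe_castSucc]
              by_cases hs : (j : ℕ) = (i : ℕ) + 1
              · simp [hs, him2, Ne.symm hij]
              · simp [hs, him2, Ne.symm hij]
        have hminor2 : (charmatrix τ).submatrix (Fin.last (m+1)).succAbove
            (Fin.last (m+1)).succAbove = charmatrix (τ.submatrix Fin.castSucc Fin.castSucc) := by
          rw [Fin.succAbove_last]
          exact charmatrix_submatrix_castSucc τ
        rw [hentry, hentry2, hminor1, hminor2, hB, bd_det]
        have hrsum : ∑ j : Fin (m+1), -C (r.coeff j) * X ^ (j : ℕ) = -r := by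
          have h1 : ∑ j : Fin (m+1), -C (r.coeff j) * X ^ (j : ℕ)
              = -∑ j : Fin (m+1), C (r.coeff j) * X ^ (j : ℕ) := by
            rw [← Finset.sum_neg_distrib]
            exact Finset.sum_congr rfl (fun j _ => neg_mul _ _)
          rw [h1, sum_fin_C_mul_X_pow (p := r) hrdeg]
        rw [hrsum]
        have hsign : (-1 : Polynomial R) ^ ((((Fin.last m).castSucc : Fin (m+2)) : ℕ)
            + ((Fin.last (m+1) : Fin (m+2)) : ℕ)) = -1 := by
          simp only [Fin.coe_castSucc, Fin.val_last]
          exact Odd.neg_one_pow ⟨m, by ring⟩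
        have hsign2 : (-1 : Polynomial R) ^ (((Fin.last (m+1) : Fin (m+2)) : ℕ)
            + ((Fin.last (m+1) : Fin (m+2)) : ℕ)) = 1 := by
          simp only [Fin.val_last]
          exact Even.neg_one_pow ⟨m+1, by ring⟩
        rw [hsign, hsign2, hr]
        ring
      · intro b _ hb
        rw [hzero b hb]
        ring
      · intro h
        exact absurd (Finset.mem_univ _) h
    · rw [Matrix.charpoly]
      exact hB
end

section
/- Let R be a commutative ring, τ ∈ Mat_{n+1}(R) stable, and a ∈ GL_{n+1}(R) commuting with τ. Suppose that for all u ∈ M_{H,τ_H}(R) (endomorphisms of V_H commuting with τ_H), the element 1 + εu of GL over R[ε]/(ε²) satisfies a(1 + εu) ∈ H(R[ε]/(ε²))·G_τ(R[ε]/(ε²)). Then a² is a scalar matrix. -/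
section MatGGP

variable {S : Type*} [CommRing S] {m : ℕ}

/-- `v` is a cyclic vector for the matrix `τ`: `S[τ] v` is everything. -/
def MatCyclicVec (τ : Matrix (Fin m) (Fin m) S) (v : Fin m → S) : Prop :=
  ∀ w : Fin m → S, ∃ p : Polynomial S, (Polynomial.aeval τ p).mulVec v = w

/-- `ℓ` is a cyclic covector for the matrix `τ`: `ℓ S[τ]` is everything. -/
def MatCoCyclicVec (τ : Matrix (Fin m) (Fin m) S) (ℓ : Fin m → S) : Prop :=
  ∀ w : Fin m → S, ∃ p : Polynomial S, Matrix.vecMul ℓ (Polynomial.aeval τ p) = w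

/-- `τ` is stable with respect to `(e, e*)`: both `e` and `e*` are `τ`-cyclic. -/
def MatStable (τ : Matrix (Fin m) (Fin m) S) (e eStar : Fin m → S) : Prop :=
  MatCyclicVec τ e ∧ MatCoCyclicVec τ eStar

/-- The projection matrix `1_H = 1 - e e*`. -/
def oneHMat (e eStar : Fin m → S) : Matrix (Fin m) (Fin m) S :=
  1 - Matrix.vecMulVec e eStar

/-- The compression `τ_H = 1_H τ 1_H`. -/
def tauHMat (τ : Matrix (Fin m) (Fin m) S) (e eStar : Fin m → S) :
    Matrix (Fin m) (Fin m) S :=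
  oneHMat e eStar * τ * oneHMat e eStar

/-- Membership in `H(S)`: an invertible matrix fixing `e` and `e*`. -/
def MemH (e eStar : Fin m → S) (g : Matrix (Fin m) (Fin m) S) : Prop :=
  IsUnit g ∧ g.mulVec e = e ∧ Matrix.vecMul eStar g = eStar

/-- Membership in the product set `H(S) · G_τ(S)`. -/
def MemHGt (τ : Matrix (Fin m) (Fin m) S) (e eStar : Fin m → S)
    (a : Matrix (Fin m) (Fin m) S) : Prop :=
  ∃ h b : Matrix (Fin m) (Fin m) S,
    MemH e eStar h ∧ IsUnit b ∧ b * τ = τ * b ∧ a = h * b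

/-- Membership in `H_{τ_H}(S)`: an element of `H(S)` commuting with the compression `τ_H`. -/
def MemHtauH (τ : Matrix (Fin m) (Fin m) S) (e eStar : Fin m → S)
    (y : Matrix (Fin m) (Fin m) S) : Prop :=
  MemH e eStar y ∧ y * tauHMat τ e eStar = tauHMat τ e eStar * y

end MatGGP

/-!
Comparing `ε`-coefficients in `a(1 + εu) = h g` shows that `a u a⁻¹` differs from an element
`C` of the centralizer of `τ` by a matrix killing `e` and `e*`. The powers `u_k` of `τ_H` in
`End(V_H)` are self-adjoint for the symmetric form `(X e, Y e) ↦ e* X Y e` on `V = R[τ] e`,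
and this turns `e* a u_k a⁻¹ = e* C` into `a u_k a⁻¹ e = a⁻¹ u_k a e` for every `k`.
Comparing consecutive `k` gives `ψ(a e) a⁻¹ e = ψ(a⁻¹ e) a e` for `ψ = e*` and `ψ = e* τ u_k`;
these covectors span `V*` because `e*` is cyclic, so `ψ = e* a` yields `a² e = (e* a² e) e`,
and cyclicity of `e` gives `a² = e* a² e`.
-/

open Matrix Polynomial

theorem Commute.aeval_right {R A : Type*} [CommSemiring R] [Semiring A] [Algebra R A] {x y : A}
    (h : Commute x y) (p : R[X]) : Commute x (aeval y p) := by
  induction p using Polynomial.induction_on' with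
  | add p q hp hq => simpa using hp.add_right hq
  | monomial n r =>
    simpa [aeval_monomial] using (Algebra.commute_algebraMap_right r x).mul_right (h.pow_right n)

section Cyclic

variable {R : Type*} [CommRing R] {m : ℕ} {τ X Y : Matrix (Fin m) (Fin m) R}

theorem MatCyclicVec.eq_of_commute {v : Fin m → R} (hv : MatCyclicVec τ v)
    (hX : Commute X τ) (hY : Commute Y τ) (h : X *ᵥ v = Y *ᵥ v) : X = Y := by
  refine ext_iff_mulVec.2 fun w => ?_
  obtain ⟨p, rfl⟩ := hv w
  rw [mulVec_mulVec, mulVec_mulVec, (hX.aeval_right p).eq, (hY.aeval_right p).eq,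
    ← mulVec_mulVec, ← mulVec_mulVec, h]

theorem MatCoCyclicVec.eq_of_commute {ℓ : Fin m → R} (hℓ : MatCoCyclicVec τ ℓ)
    (hX : Commute X τ) (hY : Commute Y τ) (h : ℓ ᵥ* X = ℓ ᵥ* Y) : X = Y := by
  refine ext_iff_vecMul.2 fun w => ?_
  obtain ⟨p, rfl⟩ := hℓ w
  rw [vecMul_vecMul, vecMul_vecMul, ← (hX.aeval_right p).eq, ← (hY.aeval_right p).eq,
    ← vecMul_vecMul, ← vecMul_vecMul, h]

theorem MatCoCyclicVec.eq_of_forall_dotProduct_eq {ℓ v w : Fin m → R} (hℓ : MatCoCyclicVec τ ℓ)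
    (h : ∀ p : R[X], (ℓ ᵥ* aeval τ p) ⬝ᵥ v = (ℓ ᵥ* aeval τ p) ⬝ᵥ w) : v = w := by
  funext i
  obtain ⟨p, hp⟩ := hℓ (Pi.single i 1)
  simpa [hp] using h p

theorem MatCoCyclicVec.eq_top {ℓ : Fin m → R} (hℓ : MatCoCyclicVec τ ℓ)
    {W : Submodule R (Fin m → R)} (hℓW : ℓ ∈ W) (hW : ∀ ψ ∈ W, ψ ᵥ* τ ∈ W) : W = ⊤ := by
  have hpow : ∀ k : ℕ, ℓ ᵥ* τ ^ k ∈ W := by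
    intro k
    induction k with
    | zero => simpa using hℓW
    | succ k ih => simpa [pow_succ] using hW _ ih
  refine Submodule.eq_top_iff'.2 fun ψ => ?_
  obtain ⟨p, rfl⟩ := hℓ ψ
  induction p using Polynomial.induction_on' with
  | add p q hp hq => simpa [vecMul_add] using W.add_mem hp hq
  | monomial k r =>
    simpa [aeval_monomial, ← Algebra.smul_def, vecMul_smul] using W.smul_mem r (hpow k)

end Cyclic

section Compression

variable {R : Type*} [CommRing R] {m : ℕ} (τ : Matrix (Fin m) (Fin m) R) (e eStar : Fin m → R)

theorem oneHMat_mulVec (v : Fin m → R) : oneHMat e eStar *ᵥ v = v - (eStar ⬝ᵥ v) • e := by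
  simp [oneHMat, sub_mulVec, vecMulVec_mulVec]

theorem vecMul_oneHMat (ψ : Fin m → R) : ψ ᵥ* oneHMat e eStar = ψ - (ψ ⬝ᵥ e) • eStar := by
  simp [oneHMat, vecMul_sub, vecMul_vecMulVec]

theorem dotProduct_mul_oneHMat_mul_mulVec (A B : Matrix (Fin m) (Fin m) R) :
    eStar ⬝ᵥ (A * oneHMat e eStar * B) *ᵥ e =
      eStar ⬝ᵥ (A * B) *ᵥ e - (eStar ⬝ᵥ A *ᵥ e) * (eStar ⬝ᵥ B *ᵥ e) := by
  rw [← mulVec_mulVec, ← mulVec_mulVec, oneHMat_mulVec, mulVec_sub, mulVec_smul, dotProduct_sub,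
    dotProduct_smul, smul_eq_mul, mul_comm, mulVec_mulVec]

variable {e eStar} (he : eStar ⬝ᵥ e = 1)
include he

theorem oneHMat_mulVec_self : oneHMat e eStar *ᵥ e = 0 := by
  rw [oneHMat_mulVec, he, one_smul, sub_self]

theorem vecMul_oneHMat_self : eStar ᵥ* oneHMat e eStar = 0 := by
  rw [vecMul_oneHMat, he, one_smul, sub_self]

theorem oneHMat_mul_self : oneHMat e eStar * oneHMat e eStar = oneHMat e eStar := by
  rw [oneHMat, sub_mul, mul_sub, mul_sub, vecMulVec_mul_vecMulVec, he, one_smul]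
  simp

theorem commute_oneHMat_tauHMat : Commute (oneHMat e eStar) (tauHMat τ e eStar) := by
  simp only [Commute, SemiconjBy, tauHMat, ← mul_assoc, oneHMat_mul_self he]
  rw [mul_assoc _ (oneHMat e eStar), oneHMat_mul_self he]

end Compression

section TauHPow

variable {R : Type*} [CommRing R] {m : ℕ} (τ : Matrix (Fin m) (Fin m) R) (e eStar : Fin m → R)

/-- The `k`-th power of `τ_H` in `End(V_H)`, whose identity element is `1_H`. -/
def tauHPow (k : ℕ) : Matrix (Fin m) (Fin m) R :=
  tauHMat τ e eStar ^ k * oneHMat e eStar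

theorem tauHPow_zero : tauHPow τ e eStar 0 = oneHMat e eStar := by
  rw [tauHPow, pow_zero, one_mul]

variable {e eStar} (he : eStar ⬝ᵥ e = 1)
include he

theorem oneHMat_mul_tauHPow (k : ℕ) :
    oneHMat e eStar * tauHPow τ e eStar k = tauHPow τ e eStar k := by
  rw [tauHPow, ← mul_assoc, ((commute_oneHMat_tauHMat τ he).pow_right k).eq, mul_assoc,
    oneHMat_mul_self he]

theorem tauHPow_mul_oneHMat (k : ℕ) :
    tauHPow τ e eStar k * oneHMat e eStar = tauHPow τ e eStar k := by
  rw [tauHPow, mul_assoc, oneHMat_mul_self he]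

theorem tauHPow_succ (k : ℕ) :
    tauHPow τ e eStar (k + 1) = oneHMat e eStar * τ * tauHPow τ e eStar k := by
  rw [tauHPow, pow_succ', mul_assoc, ← tauHPow, tauHMat, mul_assoc _ (oneHMat e eStar),
    oneHMat_mul_tauHPow τ he]

theorem tauHPow_succ' (k : ℕ) :
    tauHPow τ e eStar (k + 1) = tauHPow τ e eStar k * τ * oneHMat e eStar := by
  rw [tauHPow, pow_succ, mul_assoc, (commute_oneHMat_tauHMat τ he).symm.eq, ← mul_assoc,
    ← tauHPow, tauHMat, ← mul_assoc, ← mul_assoc, tauHPow_mul_oneHMat τ he]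

theorem tauHPow_mulVec_self (k : ℕ) : tauHPow τ e eStar k *ᵥ e = 0 := by
  rw [tauHPow, ← mulVec_mulVec, oneHMat_mulVec_self he, mulVec_zero]

theorem vecMul_tauHPow_self (k : ℕ) : eStar ᵥ* tauHPow τ e eStar k = 0 := by
  rw [← oneHMat_mul_tauHPow τ he, ← vecMul_vecMul, vecMul_oneHMat_self he, zero_vecMul]

theorem commute_tauHPow_tauHMat (k : ℕ) : Commute (tauHPow τ e eStar k) (tauHMat τ e eStar) :=
  ((Commute.refl _).pow_left k).mul_left (commute_oneHMat_tauHMat τ he)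

end TauHPow

section Symmetric

variable {R : Type*} [CommRing R] {m : ℕ} {τ : Matrix (Fin m) (Fin m) R} {e eStar : Fin m → R}

/-- `M` is self-adjoint for the symmetric form `(X e, Y e) ↦ e* X Y e` on `V = R[τ] e`. -/
def IsCentralizerSymm (τ : Matrix (Fin m) (Fin m) R) (e eStar : Fin m → R)
    (M : Matrix (Fin m) (Fin m) R) : Prop :=
  ∀ X Y : Matrix (Fin m) (Fin m) R, Commute X τ → Commute Y τ → Commute X Y →
    eStar ⬝ᵥ (X * M * Y) *ᵥ e = eStar ⬝ᵥ (Y * M * X) *ᵥ e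

theorem isCentralizerSymm_oneHMat : IsCentralizerSymm τ e eStar (oneHMat e eStar) := by
  intro X Y _ _ hXY
  rw [dotProduct_mul_oneHMat_mul_mulVec, dotProduct_mul_oneHMat_mul_mulVec, hXY.eq, mul_comm]

theorem IsCentralizerSymm.oneHMat_mul_mul {M : Matrix (Fin m) (Fin m) R}
    (hM : IsCentralizerSymm τ e eStar M)
    (hMτ : oneHMat e eStar * τ * M = M * τ * oneHMat e eStar) :
    IsCentralizerSymm τ e eStar (oneHMat e eStar * τ * M) := by
  intro X Y hX hY hXY
  have hXτ : eStar ⬝ᵥ (X * (τ * M * Y)) *ᵥ e = eStar ⬝ᵥ (Y * M * τ * X) *ᵥ e := by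
    have := hM (X * τ) Y (hX.mul_left (Commute.refl τ)) hY (hXY.mul_left hY.symm)
    simp only [mul_assoc] at this ⊢
    rw [this, hX.eq]
  have hτY := hM τ Y (Commute.refl τ) hY hY.symm
  calc eStar ⬝ᵥ (X * (oneHMat e eStar * τ * M) * Y) *ᵥ e
      = eStar ⬝ᵥ (X * oneHMat e eStar * (τ * M * Y)) *ᵥ e := by simp only [mul_assoc]
    _ = eStar ⬝ᵥ (Y * M * τ * oneHMat e eStar * X) *ᵥ e := by
      rw [dotProduct_mul_oneHMat_mul_mulVec, dotProduct_mul_oneHMat_mul_mulVec, hτY, hXτ,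
        mul_comm (eStar ⬝ᵥ X *ᵥ e)]
    _ = eStar ⬝ᵥ (Y * (oneHMat e eStar * τ * M) * X) *ᵥ e := by
      rw [hMτ]; simp only [mul_assoc]

theorem isCentralizerSymm_tauHPow (he : eStar ⬝ᵥ e = 1) (k : ℕ) :
    IsCentralizerSymm τ e eStar (tauHPow τ e eStar k) := by
  induction k with
  | zero => simpa only [tauHPow_zero] using isCentralizerSymm_oneHMat
  | succ k ih =>
    rw [tauHPow_succ τ he]
    exact ih.oneHMat_mul_mul (by rw [← tauHPow_succ τ he, tauHPow_succ' τ he])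

theorem IsCentralizerSymm.mulVec_eq {M a b C : Matrix (Fin m) (Fin m) R}
    (hℓ : MatCoCyclicVec τ eStar) (hM : IsCentralizerSymm τ e eStar M)
    (ha : Commute a τ) (hb : Commute b τ) (hab : Commute a b) (hC : Commute C τ)
    (h : eStar ᵥ* (a * M * b) = eStar ᵥ* C) : (b * M * a) *ᵥ e = C *ᵥ e := by
  refine hℓ.eq_of_forall_dotProduct_eq fun p => ?_
  set P := aeval τ p
  have hPτ : Commute P τ := ((Commute.refl τ).aeval_right p).symm
  have hPb : Commute P b := (hb.aeval_right p).symm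
  have hPC : Commute P C := (hC.aeval_right p).symm
  calc (eStar ᵥ* P) ⬝ᵥ (b * M * a) *ᵥ e = eStar ⬝ᵥ (P * b * M * a) *ᵥ e := by
        rw [← dotProduct_mulVec, mulVec_mulVec]; simp only [mul_assoc]
    _ = eStar ⬝ᵥ (a * M * (P * b)) *ᵥ e :=
        hM _ _ (hPτ.mul_left hb) ha (((ha.aeval_right p).symm).mul_left hab.symm)
    _ = (eStar ᵥ* (a * M * b)) ⬝ᵥ P *ᵥ e := by
        rw [hPb.eq, dotProduct_mulVec, dotProduct_mulVec, vecMul_vecMul]; simp only [mul_assoc]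
    _ = (eStar ᵥ* P) ⬝ᵥ C *ᵥ e := by
        rw [h, ← dotProduct_mulVec, ← dotProduct_mulVec, mulVec_mulVec, mulVec_mulVec, hPC.eq]

end Symmetric

section DualNumber

open TrivSqZeroExt

variable {R : Type*} [CommRing R] {m : ℕ}

theorem exists_commute_of_memHGt_dualNumber {τ a b u : Matrix (Fin m) (Fin m) R}
    {e eStar : Fin m → R} (hℓ : MatCoCyclicVec τ eStar) (ha : Commute a τ) (hb : Commute b τ)
    (hab : a * b = 1)
    (h : MemHGt (τ.map (algebraMap R (DualNumber R)))
      (fun i => algebraMap R (DualNumber R) (e i))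
      (fun i => algebraMap R (DualNumber R) (eStar i))
      (a.map (algebraMap R (DualNumber R)) *
        (1 + (DualNumber.eps : DualNumber R) • u.map (algebraMap R (DualNumber R))))) :
    ∃ C, Commute C τ ∧ (a * u * b) *ᵥ e = C *ᵥ e ∧ eStar ᵥ* (a * u * b) = eStar ᵥ* C := by
  obtain ⟨h, g, ⟨-, hhe, hhs⟩, -, hgτ, hhg⟩ := h
  have hfst : a = h.map fst * g.map fst := by
    ext i j
    simpa [mul_apply, fst_sum, algebraMap_eq_inl, one_apply, apply_ite] using
      congr_arg fst (congr_fun₂ hhg i j)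
  have hsnd : a * u = h.map fst * g.map snd + h.map snd * g.map fst := by
    ext i j
    simpa [mul_apply, snd_sum, algebraMap_eq_inl, one_apply, apply_ite, Finset.sum_add_distrib]
      using congr_arg snd (congr_fun₂ hhg i j)
  have hg₀ : Commute (g.map fst) τ := by
    ext i j
    simpa [mul_apply, fst_sum, algebraMap_eq_inl] using congr_arg fst (congr_fun₂ hgτ i j)
  have hg₁ : Commute (g.map snd) τ := by
    ext i j
    simpa [mul_apply, snd_sum, algebraMap_eq_inl] using congr_arg snd (congr_fun₂ hgτ i j)
  have hh₀ : eStar ᵥ* h.map fst = eStar := by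
    ext i
    simpa [vecMul, dotProduct, fst_sum, algebraMap_eq_inl] using
      congr_arg fst (congr_fun hhs i)
  have hh₁e : h.map snd *ᵥ e = 0 := by
    ext i
    simpa [mulVec, dotProduct, snd_sum, algebraMap_eq_inl] using
      congr_arg snd (congr_fun hhe i)
  have hh₁s : eStar ᵥ* h.map snd = 0 := by
    ext i
    simpa [vecMul, dotProduct, snd_sum, algebraMap_eq_inl] using
      congr_arg snd (congr_fun hhs i)
  have hg₀a : g.map fst = a := hℓ.eq_of_commute hg₀ ha (by rw [hfst, ← vecMul_vecMul, hh₀])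
  have hh₀1 : h.map fst = 1 :=
    calc h.map fst = h.map fst * g.map fst * b := by rw [hg₀a, mul_assoc, hab, mul_one]
      _ = 1 := by rw [← hfst, hab]
  have hconj : a * u * b = h.map snd + g.map snd * b := by
    rw [hsnd, hh₀1, hg₀a, one_mul, add_mul, mul_assoc, hab, mul_one, add_comm]
  refine ⟨g.map snd * b, hg₁.mul_left hb, ?_, ?_⟩
  · rw [hconj, add_mulVec, hh₁e, zero_add]
  · rw [hconj, vecMul_add, hh₁s, zero_add]

end DualNumber

section Conclusion

variable {R : Type*} [CommRing R] {m : ℕ}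

def tauHPowCovectors (τ : Matrix (Fin m) (Fin m) R) (e eStar : Fin m → R) :
    Set (Fin m → R) :=
  insert eStar (Set.range fun k => eStar ᵥ* (τ * tauHPow τ e eStar k))

def symmCovectors (v w : Fin m → R) : Submodule R (Fin m → R) :=
  LinearMap.ker (vecMulLinear (vecMulVec v w - vecMulVec w v))

theorem mem_symmCovectors {v w ψ : Fin m → R} :
    ψ ∈ symmCovectors v w ↔ (ψ ⬝ᵥ v) • w = (ψ ⬝ᵥ w) • v := by
  simp [symmCovectors, vecMul_vecMulVec, sub_eq_zero]

variable {τ a b M : Matrix (Fin m) (Fin m) R} {e eStar : Fin m → R}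

theorem vecMul_mem_symmCovectors (h : (a * M * b) *ᵥ e = (b * M * a) *ᵥ e)
    (hπ : (a * (oneHMat e eStar * M) * b) *ᵥ e = (b * (oneHMat e eStar * M) * a) *ᵥ e) :
    eStar ᵥ* M ∈ symmCovectors (a *ᵥ e) (b *ᵥ e) := by
  have expand : ∀ x y : Matrix (Fin m) (Fin m) R, (x * (oneHMat e eStar * M) * y) *ᵥ e =
      (x * M * y) *ᵥ e - (eStar ⬝ᵥ M *ᵥ y *ᵥ e) • x *ᵥ e := by
    intro x y
    simp only [← mulVec_mulVec, oneHMat_mulVec, mulVec_sub, mulVec_smul]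
  rw [expand, expand, h, sub_right_inj] at hπ
  rw [mem_symmCovectors, ← dotProduct_mulVec, ← dotProduct_mulVec]
  exact hπ.symm

theorem span_vecMul_tauHPow_eq_top (he : eStar ⬝ᵥ e = 1) (hℓ : MatCoCyclicVec τ eStar) :
    Submodule.span R (tauHPowCovectors τ e eStar) = ⊤ := by
  set W := Submodule.span R (tauHPowCovectors τ e eStar)
  have heW : eStar ∈ W := Submodule.subset_span (Set.mem_insert _ _)
  have hgen (k : ℕ) : eStar ᵥ* (τ * tauHPow τ e eStar k) ∈ W :=
    Submodule.subset_span (Set.mem_insert_of_mem _ ⟨k, rfl⟩)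
  -- `ψ = ψ 1_H + ψ(e) e*`
  have hπ (ψ : Fin m → R) (hψ : ψ ᵥ* oneHMat e eStar ∈ W) : ψ ∈ W := by
    simpa [vecMul_oneHMat] using W.add_mem hψ (W.smul_mem (ψ ⬝ᵥ e) heW)
  have hWτ : W ≤ W.comap (vecMulLinear τ) := by
    refine Submodule.span_le.2
      (Set.insert_subset_iff.2 ⟨hπ _ ?_, Set.range_subset_iff.2 fun k => hπ _ ?_⟩)
    · simpa [tauHPow_zero] using hgen 0
    · simpa [tauHPow_succ' τ he, mul_assoc] using hgen (k + 1)
  exact hℓ.eq_top heW fun ψ hψ => hWτ hψ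

theorem exists_mul_self_eq_smul_one_of_forall_tauHPow (he : eStar ⬝ᵥ e = 1)
    (hτ : MatStable τ e eStar)
    (ha : Commute a τ) (hb : Commute b τ) (hab : a * b = 1) (hba : b * a = 1)
    (hkey : ∀ k, (a * tauHPow τ e eStar k * b) *ᵥ e = (b * tauHPow τ e eStar k * a) *ᵥ e) :
    ∃ z : R, a * a = z • 1 := by
  have hkeyτ (k : ℕ) : (a * (τ * tauHPow τ e eStar k) * b) *ᵥ e =
      (b * (τ * tauHPow τ e eStar k) * a) *ᵥ e := by
    have hτ_left (x y : Matrix (Fin m) (Fin m) R) (hx : Commute x τ) :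
        x * (τ * tauHPow τ e eStar k) * y = τ * (x * tauHPow τ e eStar k * y) := by
      rw [← mul_assoc, hx.eq]; simp only [mul_assoc]
    rw [hτ_left a b ha, hτ_left b a hb, ← mulVec_mulVec _ τ, ← mulVec_mulVec _ τ, hkey]
  have hsymm : eStar ᵥ* a ∈ symmCovectors (a *ᵥ e) (b *ᵥ e) := by
    have hle : Submodule.span R (tauHPowCovectors τ e eStar) ≤
        symmCovectors (a *ᵥ e) (b *ᵥ e) := by
      refine Submodule.span_le.2
        (Set.insert_subset_iff.2 ⟨?_, Set.range_subset_iff.2 fun k => ?_⟩)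
      · rw [← vecMul_one eStar]
        refine vecMul_mem_symmCovectors (by simp [hab, hba]) ?_
        rw [mul_one, ← tauHPow_zero τ]
        exact hkey 0
      · refine vecMul_mem_symmCovectors (hkeyτ k) ?_
        rw [← mul_assoc (oneHMat e eStar), ← tauHPow_succ τ he]
        exact hkey (k + 1)
    exact hle (by rw [span_vecMul_tauHPow_eq_top he hτ.2]; exact Submodule.mem_top)
  rw [mem_symmCovectors, ← dotProduct_mulVec, ← dotProduct_mulVec, mulVec_mulVec, mulVec_mulVec,
    hab, one_mulVec, he, one_smul] at hsymm
  set z := eStar ⬝ᵥ (a * a) *ᵥ e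
  refine ⟨z, hτ.1.eq_of_commute (ha.mul_left ha) ((Commute.one_left τ).smul_left z) ?_⟩
  rw [← mulVec_mulVec, ← hsymm, mulVec_smul, mulVec_mulVec, hab, smul_mulVec]

end Conclusion

/-- Let `R` be a commutative ring, `τ ∈ Mat_{n+1}(R)` stable, and `a ∈ GL_{n+1}(R)` commuting
with `τ`.  Suppose that for all `u ∈ M_{H,τ_H}(R)` (operators supported on `V_H` commuting
with `τ_H`), the element `a(1 + εu)` over `R[ε]/(ε²)` lies in `H · G_τ`.  Then `a²` is a
scalar matrix. -/
theorem stmt_12 {R : Type*} [CommRing R] (n : ℕ)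
    (e eStar : Fin (n + 1) → R) (he : dotProduct eStar e = 1)
    (τ : Matrix (Fin (n + 1)) (Fin (n + 1)) R) (hτ : MatStable τ e eStar)
    (a : Matrix (Fin (n + 1)) (Fin (n + 1)) R) (ha : IsUnit a) (haτ : a * τ = τ * a)
    (H : ∀ u : Matrix (Fin (n + 1)) (Fin (n + 1)) R,
      u.mulVec e = 0 → Matrix.vecMul eStar u = 0 →
      u * tauHMat τ e eStar = tauHMat τ e eStar * u →
      MemHGt (τ.map (algebraMap R (DualNumber R)))
        (fun i => algebraMap R (DualNumber R) (e i))
        (fun i => algebraMap R (DualNumber R) (eStar i))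
        ((a.map (algebraMap R (DualNumber R))) *
          (1 + (DualNumber.eps : DualNumber R) • u.map (algebraMap R (DualNumber R))))) :
    ∃ z : R, a * a = z • (1 : Matrix (Fin (n + 1)) (Fin (n + 1)) R) := by
  obtain ⟨A, rfl⟩ := ha
  have hAτ : Commute (↑A⁻¹ : Matrix (Fin (n + 1)) (Fin (n + 1)) R) τ :=
    Commute.units_inv_left haτ
  refine exists_mul_self_eq_smul_one_of_forall_tauHPow he hτ haτ hAτ A.mul_inv A.inv_mul
    fun k => ?_
  obtain ⟨C, hC, hCe, hCs⟩ := exists_commute_of_memHGt_dualNumber hτ.2 haτ hAτ A.mul_inv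
    (H _ (tauHPow_mulVec_self τ he k) (vecMul_tauHPow_self τ he k)
      (commute_tauHPow_tauHMat τ he k))
  rw [hCe, (isCentralizerSymm_tauHPow he k).mulVec_eq hτ.2 haτ hAτ
    (Commute.units_inv_right (Commute.refl _)) hC hCs]
end

section
/- Let o be the ring of integers of a non-archimedean local field with maximal ideal p and residue cardinality q, let m ≥ 1, and let P ∈ (o/p^m)[X_1,...,X_n] have degree ≤ d. Suppose that for each y ∈ (o/p^m)^n, at least one of the linear Taylor coefficients of P at y is a unit. Then the number of y ∈ (o/p^m)^n with P(y) = 0 in o/p^m is at most C·q^{mn−m}, with C depending only on n and d. -/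
/-!
Sort the zeros `y` of `P` by a coordinate `i` in which the linear Taylor coefficient of `P` at `y`
is a unit, and count them along the lines parallel to the `i`-th axis. On such a line `P` becomes a
one-variable polynomial `g` of degree at most `d`, and the zeros in question are roots of `g` at
which `g'` is a unit. Over a local ring such a root is determined by its residue, since
`g (s + δ) = g s + δ (g' s + k δ)`; and its residue is a root of the reduction of `g`, which is
nonzero. So each line carries at most `d` of these zeros, and there are `q ^ (m (n - 1))` lines
in each of the `n` directions.
-/

open Polynomial IsLocalRing

namespace Polynomial

variable {R : Type*} [CommRing R] [IsLocalRing R]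

theorem eq_of_isRoot_of_residue_eq {g : R[X]} {s t : R} (hs : g.IsRoot s) (ht : g.IsRoot t)
    (hs_deriv : IsUnit (g.derivative.eval s)) (hst : residue R s = residue R t) : s = t := by
  obtain ⟨k, hk⟩ := binomExpansion g s (t - s)
  rw [add_sub_cancel, ht.eq_zero, hs.eq_zero] at hk
  have hunit : IsUnit (g.derivative.eval s + k * (t - s)) := by
    rw [← residue_ne_zero_iff_isUnit, map_add, map_mul, map_sub, hst, sub_self, mul_zero,
      add_zero, residue_ne_zero_iff_isUnit]
    exact hs_deriv
  have : (t - s) * (g.derivative.eval s + k * (t - s)) = 0 := by linear_combination -hk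
  exact (sub_eq_zero.mp (hunit.mul_left_eq_zero.mp this)).symm

theorem ncard_simpleRoots_le [Finite R] (g : R[X]) :
    {t | g.IsRoot t ∧ IsUnit (g.derivative.eval t)}.ncard ≤ g.natDegree := by
  classical
  obtain h | ⟨s, -, hs⟩ :=
    Set.eq_empty_or_nonempty {t | g.IsRoot t ∧ IsUnit (g.derivative.eval t)}
  · rw [h, Set.ncard_empty]
    exact Nat.zero_le _
  have hmap : g.map (residue R) ≠ 0 := by
    intro h0
    have := congrArg (fun f => (derivative f).eval (residue R s)) h0
    simp only [derivative_map, eval_map, eval₂_at_apply, derivative_zero, eval_zero,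
      residue_eq_zero_iff] at this
    exact (mem_maximalIdeal _).mp this hs
  calc _ ≤ ((g.map (residue R)).roots.toFinset : Set (ResidueField R)).ncard := by
        refine Set.ncard_le_ncard_of_injOn (residue R) (fun t ht => ?_)
          (fun s hs t ht hst => eq_of_isRoot_of_residue_eq hs.1 ht.1 hs.2 hst)
        simp [hmap, ht.1.eq_zero]
    _ ≤ g.natDegree := by
        rw [Set.ncard_coe_finset]
        exact (Multiset.toFinset_card_le _).trans ((card_roots' _).trans natDegree_map_le)

end Polynomial

theorem Set.ncard_le_mul_of_forall_ncard_line_le {R σ : Type*} [AddCommGroup R] [Fintype R]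
    [Fintype σ] [DecidableEq σ] (A : Set (σ → R)) (i : σ) {d : ℕ}
    (h : ∀ y, {t | y + (Pi.single i t : σ → R) ∈ A}.ncard ≤ d) :
    A.ncard ≤ d * Fintype.card R ^ (Fintype.card σ - 1) := by
  let fiber (w : {j // j ≠ i} → R) : Set (σ → R) :=
    {y ∈ A | ∀ j : {j // j ≠ i}, y j = w j}
  have hfiber (w) : (fiber w).ncard ≤ d := by
    rcases (fiber w).eq_empty_or_nonempty with hw | ⟨y₀, hy₀A, hy₀⟩
    · simp [hw]
    calc (fiber w).ncard
        ≤ ((fun t => y₀ + Pi.single i t) '' {t | y₀ + Pi.single i t ∈ A}).ncard := by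
          refine Set.ncard_le_ncard (fun y ⟨hyA, hy⟩ => ⟨y i - y₀ i, ?_⟩) (Set.toFinite _)
          have hline : y₀ + Pi.single i (y i - y₀ i) = y := by
            funext j
            by_cases hj : j = i
            · subst hj; simp
            · simp [hj, hy ⟨j, hj⟩, hy₀ ⟨j, hj⟩]
          exact ⟨by rwa [Set.mem_ofPred_eq, hline], hline⟩
      _ ≤ d := (Set.ncard_image_le (Set.toFinite _)).trans (h y₀)
  calc A.ncard ≤ (⋃ w, fiber w).ncard :=
        Set.ncard_le_ncard (fun y hy => Set.mem_iUnion.2 ⟨fun j => y j, hy, fun _ => rfl⟩)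
          (Set.toFinite _)
    _ ≤ ∑ w, (fiber w).ncard := Set.ncard_iUnion_le_of_fintype _
    _ ≤ ∑ _w : {j // j ≠ i} → R, d := Finset.sum_le_sum fun w _ => hfiber w
    _ = d * Fintype.card R ^ (Fintype.card σ - 1) := by
        simp [Fintype.card_subtype_compl, mul_comm]

namespace MvPolynomial

variable {R σ : Type*} [CommRing R]

theorem natDegree_aeval_le_totalDegree {f : σ → R[X]} (hf : ∀ j, (f j).natDegree ≤ 1)
    (P : MvPolynomial σ R) : (aeval f P).natDegree ≤ P.totalDegree := by
  conv_lhs => rw [P.as_sum, map_sum]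
  refine natDegree_sum_le_of_forall_le _ _ fun s hs => ?_
  rw [aeval_monomial, Polynomial.algebraMap_eq]
  refine natDegree_C_mul_le _ _ |>.trans ?_
  calc (s.prod fun j e => f j ^ e).natDegree
      ≤ ∑ j ∈ s.support, (f j ^ s j).natDegree := natDegree_prod_le _ _
    _ ≤ ∑ j ∈ s.support, s j :=
        Finset.sum_le_sum fun j _ => natDegree_pow_le_of_le _ (hf j) |>.trans (by simp)
    _ ≤ P.totalDegree := le_totalDegree hs

variable [DecidableEq σ]

theorem coeff_aeval_piSingle_X (Q : MvPolynomial σ R) (i : σ) (k : ℕ) :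
    (aeval (Pi.single i (Polynomial.X : R[X])) Q).coeff k = coeff (Finsupp.single i k) Q := by
  induction Q using MvPolynomial.induction_on' with
  | monomial s c =>
    rw [aeval_monomial, Polynomial.algebraMap_eq, coeff_monomial]
    by_cases hs : s.support ⊆ {i}
    · rw [Finsupp.support_subset_singleton.mp hs, Finsupp.prod_single_index (by simp),
        Pi.single_eq_same, coeff_C_mul_X_pow]
      simp only [(Finsupp.single_injective i).eq_iff, eq_comm]
    · obtain ⟨j, hj, hji⟩ : ∃ j ∈ s.support, j ≠ i := by
        simpa [Finset.subset_iff] using hs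
      have : (s.prod fun j e => (Pi.single i Polynomial.X : σ → R[X]) j ^ e) = 0 :=
        Finset.prod_eq_zero hj (by simp [hji, Finsupp.mem_support_iff.mp hj])
      rw [this, mul_zero, Polynomial.coeff_zero, if_neg]
      rintro rfl
      simp [hji] at hj
  | add p q hp hq => simp [hp, hq]

noncomputable def linearTaylorCoeff (P : MvPolynomial σ R) (y : σ → R) (i : σ) : R :=
  coeff (Finsupp.single i 1) (bind₁ (fun j => C (y j) + X j) P)

noncomputable def lineRestriction (P : MvPolynomial σ R) (y : σ → R) (i : σ) : R[X] :=
  aeval (fun j => Polynomial.C (y j) + (Pi.single i Polynomial.X : σ → R[X]) j) P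

section

variable (P : MvPolynomial σ R) (y : σ → R) (i : σ)

theorem eval_lineRestriction (t : R) :
    (lineRestriction P y i).eval t = eval (y + Pi.single i t) P := by
  rw [lineRestriction, ← Polynomial.coe_aeval_eq_eval, comp_aeval_apply, ← coe_aeval_eq_eval]
  refine congrArg (aeval · P) ?_
  funext j
  by_cases hj : j = i
  · subst hj; simp
  · simp [hj]

theorem natDegree_lineRestriction_le : (lineRestriction P y i).natDegree ≤ P.totalDegree := by
  refine natDegree_aeval_le_totalDegree (fun j => ?_) P
  by_cases hj : j = i
  · subst hj; simpa using Polynomial.natDegree_X_le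
  · simp [hj]

theorem lineRestriction_add_single (t : R) :
    lineRestriction P (y + Pi.single i t) i = taylor t (lineRestriction P y i) := by
  change _ = taylorAlgHom t _
  rw [lineRestriction, lineRestriction, comp_aeval_apply]
  refine congrArg (aeval · P) ?_
  funext j
  by_cases hj : j = i
  · subst hj
    simp only [Pi.add_apply, Pi.single_eq_same, map_add, taylorAlgHom_apply, taylor_C, taylor_X]
    ring
  · simp [hj]

theorem coeff_one_lineRestriction :
    (lineRestriction P y i).coeff 1 = linearTaylorCoeff P y i := by
  rw [linearTaylorCoeff, ← coeff_aeval_piSingle_X, aeval_bind₁, lineRestriction]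
  simp

theorem derivative_lineRestriction_eval (t : R) :
    (lineRestriction P y i).derivative.eval t = linearTaylorCoeff P (y + Pi.single i t) i := by
  rw [← taylor_coeff_one, ← lineRestriction_add_single, coeff_one_lineRestriction]

end

theorem ncard_zeros_le [IsLocalRing R] [Fintype R] [Fintype σ] (P : MvPolynomial σ R)
    (hP : ∀ y, ∃ i, IsUnit (linearTaylorCoeff P y i)) :
    {y | eval y P = 0}.ncard ≤
      Fintype.card σ * P.totalDegree * Fintype.card R ^ (Fintype.card σ - 1) := by
  let T (i : σ) : Set (σ → R) := {y | eval y P = 0 ∧ IsUnit (linearTaylorCoeff P y i)}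
  have hT (i) : (T i).ncard ≤ P.totalDegree * Fintype.card R ^ (Fintype.card σ - 1) := by
    refine Set.ncard_le_mul_of_forall_ncard_line_le _ i fun y => ?_
    have hline : {t | y + Pi.single i t ∈ T i} =
        {t | (lineRestriction P y i).IsRoot t ∧
          IsUnit ((lineRestriction P y i).derivative.eval t)} := by
      ext t
      simp only [Set.mem_ofPred_eq, T, IsRoot, eval_lineRestriction,
        derivative_lineRestriction_eval]
    rw [hline]
    exact (Polynomial.ncard_simpleRoots_le _).trans (natDegree_lineRestriction_le P y i)
  calc {y | eval y P = 0}.ncard ≤ (⋃ i, T i).ncard :=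
        Set.ncard_le_ncard (fun y hy => Set.mem_iUnion.2 ((hP y).imp fun _ hi => ⟨hy, hi⟩))
          (Set.toFinite _)
    _ ≤ ∑ i, (T i).ncard := Set.ncard_iUnion_le_of_fintype _
    _ ≤ ∑ _i : σ, P.totalDegree * Fintype.card R ^ (Fintype.card σ - 1) :=
        Finset.sum_le_sum fun i _ => hT i
    _ = _ := by simp [mul_assoc]

end MvPolynomial

theorem IsLocalRing.quotient_maximalIdeal_pow {o : Type*} [CommRing o] [IsLocalRing o] {m : ℕ}
    (hm : m ≠ 0) : IsLocalRing (o ⧸ maximalIdeal o ^ m) :=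
  have : Nontrivial (o ⧸ maximalIdeal o ^ m) :=
    Ideal.Quotient.nontrivial_iff.mpr
      ((Ideal.pow_le_self hm).trans_lt (maximalIdeal.isMaximal o).ne_top.lt_top).ne
  .of_surjective' _ Ideal.Quotient.mk_surjective

theorem IsDiscreteValuationRing.natCard_quotient_maximalIdeal_pow (o : Type*) [CommRing o]
    [IsDomain o] [IsDiscreteValuationRing o] (m : ℕ) :
    Nat.card (o ⧸ IsLocalRing.maximalIdeal o ^ m) = Nat.card (ResidueField o) ^ m := by
  have h := cardQuot_pow_of_prime (not_a_field o) (i := m)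
  rwa [Submodule.cardQuot_apply, Submodule.cardQuot_apply] at h

/-- Uniform bound for polynomial congruences with a unit linear Taylor coefficient.  For all
`n` and `d` there is a constant `C = C(n,d)` such that: if `o` is the ring of integers of a
non-archimedean local field (a discrete valuation ring) with maximal ideal `p` and residue
cardinality `q`, `m ≥ 1`, and `P ∈ (o/p^m)[X_1,…,X_n]` has degree `≤ d` and at each point
`y ∈ (o/p^m)^n` some linear Taylor coefficient of `P` at `y` is a unit, then the number of
solutions of `P(y) = 0` in `(o/p^m)^n` is at most `C · q^{mn - m}`. -/
theorem stmt_17 (n d : ℕ) :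
    ∃ C : ℕ, ∀ (o : Type) [CommRing o] [IsDomain o] [IsDiscreteValuationRing o]
      [Fintype (IsLocalRing.ResidueField o)] (q : ℕ),
      Fintype.card (IsLocalRing.ResidueField o) = q →
      ∀ (m : ℕ), 1 ≤ m →
      ∀ [Fintype (o ⧸ (IsLocalRing.maximalIdeal o ^ m))],
      ∀ P : MvPolynomial (Fin n) (o ⧸ (IsLocalRing.maximalIdeal o ^ m)),
        P.totalDegree ≤ d →
        (∀ y : Fin n → o ⧸ (IsLocalRing.maximalIdeal o ^ m),
          ∃ i : Fin n, IsUnit (MvPolynomial.coeff (Finsupp.single i 1)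
            (MvPolynomial.bind₁
              (fun i => MvPolynomial.C (y i) + MvPolynomial.X i) P))) →
        Set.ncard {y : Fin n → o ⧸ (IsLocalRing.maximalIdeal o ^ m) |
            MvPolynomial.eval y P = 0} ≤ C * q ^ (m * n - m) := by
  refine ⟨n * d, fun o _ _ _ _ q hq m hm _ P hdeg hTaylor => ?_⟩
  have : IsLocalRing (o ⧸ maximalIdeal o ^ m) := quotient_maximalIdeal_pow (by omega)
  have hcard : Fintype.card (o ⧸ maximalIdeal o ^ m) = q ^ m := by
    rw [← Nat.card_eq_fintype_card, IsDiscreteValuationRing.natCard_quotient_maximalIdeal_pow,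
      Nat.card_eq_fintype_card, hq]
  calc _ ≤ Fintype.card (Fin n) * P.totalDegree *
          Fintype.card (o ⧸ maximalIdeal o ^ m) ^ (Fintype.card (Fin n) - 1) :=
        MvPolynomial.ncard_zeros_le P hTaylor
    _ ≤ n * d * (q ^ m) ^ (n - 1) := by rw [hcard, Fintype.card_fin]; gcongr
    _ = n * d * q ^ (m * n - m) := by rw [← pow_mul, Nat.mul_sub_one]
end

section
/- Suppose q is odd, o is the ring of integers of a non-archimedean local field with maximal ideal p and residue cardinality q, and let q0 = p^m be a nonzero proper ideal. Let a ∈ GL_{n+1}(o/q0) be such that (i) the image of a in GL_{n+1}(o/p) is scalar, and (ii) a² is scalar in GL_{n+1}(o/q0). Then a is scalar in GL_{n+1}(o/q0). -/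
/-!
Since the residue field has odd cardinality, `2` is a unit. Write `a ≡ λ` modulo the kernel of
`o/𝔭^m → o/𝔭`, a nilpotent ideal. Then `a² = c` is a scalar with `c ≡ λ²`, and Hensel's lemma (a
ring is complete, hence Henselian, at a nilpotent ideal) gives `μ ≡ λ` with `μ² = c`. Now
`(a + μ)(a - μ) = a² - μ² = 0`, and `a + μ ≡ 2λ` is invertible, so `a = μ`.
-/

section

variable {R S : Type*} [CommRing R] [CommRing S]

theorem isAdicComplete_of_pow_eq_bot {I : Ideal R} {m : ℕ} (hI : I ^ m = ⊥)
    (M : Type*) [AddCommGroup M] [Module R M] : IsAdicComplete I M where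
  haus' x hx := by simpa [hI] using hx m
  prec' f hf := ⟨f m, fun n => by
    rcases le_total n m with hnm | hmn
    · exact hf hnm
    · have hfn : f m = f n := (SModEq.bot (R := R)).mp (by simpa [hI] using hf hmn)
      rw [hfn]⟩

theorem Ideal.Quotient.ker_factor {I J : Ideal R} (h : I ≤ J) :
    RingHom.ker (Ideal.Quotient.factor h) = J.map (Ideal.Quotient.mk I) := by
  rw [← Ideal.map_comap_of_surjective _ Ideal.Quotient.mk_surjective (RingHom.ker _),
    RingHom.comap_ker, Ideal.Quotient.factor_comp_mk, Ideal.mk_ker]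

theorem IsLocalRing.isUnit_two_of_odd_card_residueField [IsLocalRing R]
    [Fintype (ResidueField R)] (h : Odd (Fintype.card (ResidueField R))) : IsUnit (2 : R) := by
  rw [← residue_ne_zero_iff_isUnit, map_ofNat]
  intro h2
  have := CharTwo.of_one_ne_zero_of_two_eq_zero one_ne_zero h2
  have := FiniteField.even_card_iff_char_two.mp (ringChar.eq (ResidueField R) 2)
  rw [Nat.odd_iff] at h
  omega

theorem HenselianRing.isLocalHom_of_surjective (φ : R →+* S) (hφ : Function.Surjective φ)
    [HenselianRing R (RingHom.ker φ)] : IsLocalHom φ := by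
  refine ⟨fun x hx => ?_⟩
  obtain ⟨y, hy⟩ := hφ ↑hx.unit⁻¹
  have hxy : x * y - 1 ∈ Ideal.jacobson ⊥ :=
    HenselianRing.jac (I := RingHom.ker φ) (by
      rw [RingHom.mem_ker, map_sub, map_mul, map_one, hy, IsUnit.mul_val_inv, sub_self])
  have hunit : IsUnit (x * y) := by simpa using Ideal.mem_jacobson_bot.mp hxy 1
  exact isUnit_of_mul_isUnit_left hunit

open Polynomial in
theorem HenselianRing.exists_sq_eq_of_sub_mem (I : Ideal R) [HenselianRing R I] {c l : R}
    (hl : IsUnit (2 * l)) (hc : l ^ 2 - c ∈ I) : ∃ μ, μ ^ 2 = c ∧ μ - l ∈ I := by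
  have hderiv : (derivative (X ^ 2 - C c)).eval l = 2 * l := by simp; ring
  obtain ⟨μ, hroot, hμ⟩ := HenselianRing.is_henselian (X ^ 2 - C c)
    (monic_X_pow_sub_C c two_ne_zero) l (by simpa using hc)
    (by simpa only [hderiv] using hl.map (Ideal.Quotient.mk I))
  exact ⟨μ, by simpa [sub_eq_zero] using hroot, hμ⟩

theorem eq_of_mul_self_eq_of_isUnit_add {A : Type*} [Ring A] {a s : A} (hs : Commute a s)
    (h : a * a = s * s) (hu : IsUnit (a + s)) : a = s := by
  rw [← sub_eq_zero, ← hu.mul_right_eq_zero, ← hs.mul_self_sub_mul_self_eq, h, sub_self]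

namespace Matrix

variable {n : Type*} [Fintype n] [DecidableEq n]

theorem isUnit_of_isUnit_map (φ : R →+* S) [IsLocalHom φ] {M : Matrix n n R}
    (h : IsUnit (M.map φ)) : IsUnit M := by
  rw [isUnit_iff_isUnit_det] at h ⊢
  rw [← RingHom.mapMatrix_apply, ← RingHom.map_det] at h
  exact h.of_map

theorem isUnit_of_isUnit_smul_one [Nonempty n] {z : R} (h : IsUnit (z • (1 : Matrix n n R))) :
    IsUnit z := by
  rwa [isUnit_iff_isUnit_det, det_smul, det_one, mul_one, isUnit_pow_iff Fintype.card_ne_zero] at h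

omit [Fintype n] in
theorem smul_one_injective [Nonempty n] :
    Function.Injective (fun z : R => z • (1 : Matrix n n R)) := by
  intro x y h
  simpa using congrFun (congrFun h (Classical.arbitrary n)) (Classical.arbitrary n)

omit [Fintype n] in
theorem map_smul_one (φ : R →+* S) (c : R) : (c • (1 : Matrix n n R)).map φ = φ c • 1 := by
  ext i j
  by_cases h : i = j <;> simp [h]

theorem exists_eq_smul_one_of_mul_self_eq_smul_one [Nonempty n] (φ : R →+* S)
    (hφ : Function.Surjective φ) [HenselianRing R (RingHom.ker φ)] (htwo : IsUnit (2 : R))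
    {a : Matrix n n R} (ha : IsUnit a) {z : S} (hz : a.map φ = z • 1) {c : R}
    (hc : a * a = c • 1) : ∃ μ : R, a = μ • 1 := by
  have := HenselianRing.isLocalHom_of_surjective φ hφ
  obtain ⟨l, rfl⟩ := hφ z
  have hl : IsUnit l := by
    have hunit := ha.map φ.mapMatrix
    rw [RingHom.mapMatrix_apply, hz] at hunit
    exact (isUnit_of_isUnit_smul_one hunit).of_map
  have hcl : l ^ 2 - c ∈ RingHom.ker φ := by
    rw [RingHom.mem_ker, map_sub, sub_eq_zero]
    apply smul_one_injective (n := n)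
    calc φ (l ^ 2) • (1 : Matrix n n S) = (a * a).map φ := by
          rw [Matrix.map_mul, hz, smul_mul_smul, mul_one, map_pow, sq]
      _ = φ c • 1 := by rw [hc, map_smul_one]
  obtain ⟨μ, rfl, hμl⟩ := HenselianRing.exists_sq_eq_of_sub_mem _ (htwo.mul hl) hcl
  refine ⟨μ, eq_of_mul_self_eq_of_isUnit_add ((Commute.one_right a).smul_right μ)
    (by rw [hc, smul_mul_smul, mul_one, sq]) (isUnit_of_isUnit_map φ ?_)⟩
  have hφμ : φ μ = φ l := by rwa [RingHom.sub_mem_ker_iff] at hμl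
  rw [Matrix.map_add _ (map_add φ), map_smul_one, hz, hφμ, ← add_smul, ← two_mul, ← map_ofNat φ,
    ← map_mul, ← Algebra.algebraMap_eq_smul_one]
  exact ((htwo.mul hl).map φ).map _

end Matrix

end

/-- Suppose `q` is odd, `o` the ring of integers of a non-archimedean local field (a DVR) with
maximal ideal `p` and residue cardinality `q`, and `q0 = p^m` a nonzero proper ideal.  Let
`a ∈ GL_{n+1}(o/q0)` be such that (i) the image of `a` in `GL_{n+1}(o/p)` is scalar and (ii)
`a²` is scalar.  Then `a` is scalar. -/
theorem stmt_18 (n : ℕ) (o : Type*) [CommRing o] [IsDomain o] [IsDiscreteValuationRing o]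
    [Fintype (IsLocalRing.ResidueField o)] (q : ℕ)
    (hq : Fintype.card (IsLocalRing.ResidueField o) = q) (hodd : Odd q)
    (m : ℕ) (hm : 1 ≤ m)
    (a : Matrix (Fin (n + 1)) (Fin (n + 1)) (o ⧸ (IsLocalRing.maximalIdeal o ^ m)))
    (ha : IsUnit a)
    (h1 : ∃ z : o ⧸ IsLocalRing.maximalIdeal o,
      a.map (Ideal.Quotient.factor (S := IsLocalRing.maximalIdeal o ^ m)
          (T := IsLocalRing.maximalIdeal o)
          (Ideal.pow_le_self (Nat.one_le_iff_ne_zero.mp hm))) =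
        z • (1 : Matrix (Fin (n + 1)) (Fin (n + 1)) (o ⧸ IsLocalRing.maximalIdeal o)))
    (h2 : ∃ z : o ⧸ (IsLocalRing.maximalIdeal o ^ m),
      a * a = z • (1 : Matrix (Fin (n + 1)) (Fin (n + 1))
        (o ⧸ (IsLocalRing.maximalIdeal o ^ m)))) :
    ∃ z : o ⧸ (IsLocalRing.maximalIdeal o ^ m),
      a = z • (1 : Matrix (Fin (n + 1)) (Fin (n + 1))
        (o ⧸ (IsLocalRing.maximalIdeal o ^ m))) := by
  set 𝔭 := IsLocalRing.maximalIdeal o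
  have hnil : RingHom.ker (Ideal.Quotient.factor (Ideal.pow_le_self (I := 𝔭)
      (Nat.one_le_iff_ne_zero.mp hm))) ^ m = ⊥ := by
    rw [Ideal.Quotient.ker_factor, ← Ideal.map_pow, Ideal.map_quotient_self]
  have := isAdicComplete_of_pow_eq_bot hnil (o ⧸ 𝔭 ^ m)
  have htwo : IsUnit (2 : o ⧸ 𝔭 ^ m) := by
    simpa only [map_ofNat] using (IsLocalRing.isUnit_two_of_odd_card_residueField (hq ▸ hodd)).map
      (Ideal.Quotient.mk (𝔭 ^ m))
  obtain ⟨z, hz⟩ := h1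
  obtain ⟨c, hc⟩ := h2
  exact Matrix.exists_eq_smul_one_of_mul_self_eq_smul_one _ (Ideal.Quotient.factor_surjective _)
    htwo ha hz hc
end

section
/- Let o be a discrete valuation ring with maximal ideal p and finite residue field of cardinality q, let q0 ⊆ p be a nonzero ideal with Q = [o : q0], and let τ ∈ Mat_n(o/q0) be a cyclic matrix. Then the centralizer group G_τ(o/q0) = {g ∈ GL_n(o/q0) : gτ = τg} has cardinality at least (1 − q^{−1})^n · Q^n. -/
/-!
Let `R = o/q₀`, `k` its residue field and `χ` the characteristic polynomial of `τ`. Evaluation at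
`τ` maps `A = R[X]/(χ)` into the centralizer of `τ`; it is injective because, for a cyclic vector
`v`, `a ↦ a(τ) v` maps the `Qⁿ` elements of `A` onto the `Qⁿ` vectors of `Rⁿ`. Hence `Aˣ` embeds
into `G_τ`. Reduction `A → Ā = k[X]/(χ̄)` is surjective and reflects units (a matrix over the local
ring `R` is invertible iff its reduction is, and a finite ring embedded in a ring keeps inverses),
so `|Aˣ| / |A| = |Āˣ| / |Ā|`. Finally `|(k[X]/(f))ˣ| ≥ (q - 1)^(deg f)` by induction over the
irreducible factors of `f`: coprime factors split by the Chinese remainder theorem, and a repeated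
irreducible factor `g` multiplies the number of units by `q^(deg g)` through a nilpotent kernel.
-/

open Function Polynomial

theorem AddMonoidHom.card_preimage_mul_card {A B : Type*} [AddGroup A] [AddGroup B] (φ : A →+ B)
    (hφ : Surjective φ) (S : Set B) :
    Nat.card (φ ⁻¹' S) * Nat.card B = Nat.card S * Nat.card A := by
  let e := QuotientAddGroup.quotientKerEquivOfSurjective φ hφ
  have hcard (T : Set B) : Nat.card (φ ⁻¹' T) = Nat.card φ.ker * Nat.card T := by
    calc Nat.card (φ ⁻¹' T) = Nat.card (QuotientAddGroup.mk ⁻¹' (e ⁻¹' T) : Set A) := rfl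
      _ = Nat.card φ.ker * Nat.card (e ⁻¹' T) := by
        rw [← Nat.card_prod]
        exact Nat.card_congr (QuotientAddGroup.preimageMkEquivAddSubgroupProdSet _ _)
      _ = Nat.card φ.ker * Nat.card T := by
        rw [Nat.card_preimage_of_injective e.injective (by simp [e.surjective.range_eq])]
  have huniv := hcard Set.univ
  rw [Set.preimage_univ, Nat.card_univ, Nat.card_univ] at huniv
  rw [hcard, huniv]
  ring

theorem RingHom.card_units_mul_card {A B : Type*} [Ring A] [Ring B] (π : A →+* B)
    (hπ : Surjective π) (hlift : ∀ x, IsUnit (π x) → IsUnit x) :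
    Nat.card Aˣ * Nat.card B = Nat.card Bˣ * Nat.card A := by
  rw [← Nat.card_range_of_injective (Units.val_injective (α := A)),
    ← Nat.card_range_of_injective (Units.val_injective (α := B)),
    ← π.toAddMonoidHom.card_preimage_mul_card hπ]
  congr 3
  ext x
  exact ⟨fun (hx : IsUnit x) => hx.map π, hlift x⟩

theorem RingHom.isUnit_of_isUnit_map_of_isNilpotent_ker {A B : Type*} [CommRing A] [Ring B]
    (π : A →+* B) (hπ : Surjective π) (hker : ∀ z, π z = 0 → IsNilpotent z) {x : A}
    (hx : IsUnit (π x)) : IsUnit x := by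
  obtain ⟨y, hy⟩ := hπ ↑hx.unit⁻¹
  have hxy : IsNilpotent (x * y - 1) := hker _ (by simp [hy])
  exact isUnit_of_mul_isUnit_left (x := x) (y := y) (by simpa using hxy.isUnit_add_one)

theorem RingHom.isUnit_of_isUnit_map_of_injective {A B : Type*} [CommRing A] [_root_.Finite A]
    [Ring B] (Θ : A →+* B) (hΘ : Injective Θ) {x : A} (hx : IsUnit (Θ x)) : IsUnit x := by
  have hmul : Injective (x * ·) := fun a b hab =>
    hΘ (hx.mul_left_cancel (by simpa only [map_mul] using congrArg Θ hab))
  obtain ⟨y, hy⟩ := _root_.Finite.injective_iff_surjective.mp hmul 1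
  exact .of_mul_eq_one y hy

theorem PowerBasis.natCard_eq_pow_dim {R S : Type*} [CommRing R] [Ring S] [Algebra R S]
    (pb : PowerBasis R S) : Nat.card S = Nat.card R ^ pb.dim := by
  rw [Nat.card_congr pb.basis.equivFun.toEquiv, Nat.card_fun, Nat.card_fin]

namespace Matrix

variable {ι R S : Type*} [Fintype ι] [DecidableEq ι] [CommRing R] [CommRing S]

theorem isUnit_map_iff (f : R →+* S) [IsLocalHom f] (M : Matrix ι ι R) :
    IsUnit (M.map f) ↔ IsUnit M := by
  rw [isUnit_iff_isUnit_det, isUnit_iff_isUnit_det, ← RingHom.mapMatrix_apply,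
    ← RingHom.map_det, _root_.isUnit_map_iff]

theorem map_aeval (f : R →+* S) (M : Matrix ι ι R) (p : R[X]) :
    (aeval M p).map f = aeval (M.map f) (p.map f) := by
  rw [← RingHom.mapMatrix_apply, map_aeval_eq_aeval_map (φ := f)]
  · rfl
  · ext r i j
    simp [algebraMap_matrix_apply, apply_ite f]

end Matrix

namespace AdjoinRoot

section CommRing

variable {R S : Type*} [CommRing R] [CommRing S]

theorem natCard_eq_of_monic {f : R[X]} (hf : f.Monic) :
    Nat.card (AdjoinRoot f) = Nat.card R ^ f.natDegree := by
  rw [(powerBasis' hf).natCard_eq_pow_dim, powerBasis'_dim]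

theorem finite_of_monic [Finite R] {f : R[X]} (hf : f.Monic) : Finite (AdjoinRoot f) :=
  have := (powerBasis' hf).finite
  Module.finite_of_finite R

theorem map_mk (f : R →+* S) (p : R[X]) (q : S[X]) (h : q ∣ p.map f) (g : R[X]) :
    map f p q h (mk p g) = mk q (g.map f) := by
  rw [map, lift_mk, ← eval₂_map, ← algebraMap_eq, ← aeval_def, aeval_eq]

theorem map_surjective (f : R →+* S) (p : R[X]) (q : S[X]) (h : q ∣ p.map f)
    (hf : Surjective f) : Surjective (map f p q h) := by
  intro y
  induction y using AdjoinRoot.induction_on with | ih g => ?_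
  obtain ⟨g, rfl⟩ := Polynomial.map_surjective f hf g
  exact ⟨mk p g, map_mk f p q h g⟩

variable {M : Type*} [Ring M] [Algebra R M] {f : R[X]}

/-- `AdjoinRoot.lift` into a possibly noncommutative `R`-algebra. -/
noncomputable def aevalHom (x : M) (hx : aeval x f = 0) : AdjoinRoot f →+* M :=
  Ideal.Quotient.lift _ (aeval x).toRingHom fun a ha => by
    obtain ⟨t, rfl⟩ := Ideal.mem_span_singleton'.mp ha
    simp [hx]

@[simp]
theorem aevalHom_mk (x : M) (hx : aeval x f = 0) (p : R[X]) :
    aevalHom x hx (mk f p) = aeval x p :=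
  Ideal.Quotient.lift_mk _ _ _

theorem aevalHom_mul_comm (x : M) (hx : aeval x f = 0) (a : AdjoinRoot f) :
    aevalHom x hx a * x = x * aevalHom x hx a := by
  have hroot : aevalHom x hx (root f) = x := by rw [← mk_X, aevalHom_mk, aeval_X]
  calc aevalHom x hx a * x = aevalHom x hx (a * root f) := by rw [map_mul, hroot]
    _ = aevalHom x hx (root f * a) := by rw [mul_comm]
    _ = x * aevalHom x hx a := by rw [map_mul, hroot]

end CommRing

section Field

variable {k : Type*} [Field k]

theorem natCard_eq_of_ne_zero {f : k[X]} (hf : f ≠ 0) :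
    Nat.card (AdjoinRoot f) = Nat.card k ^ f.natDegree := by
  rw [(powerBasis hf).natCard_eq_pow_dim, powerBasis_dim]

variable [Finite k]

theorem finite_of_ne_zero {f : k[X]} (hf : f ≠ 0) : Finite (AdjoinRoot f) :=
  Nat.finite_of_card_ne_zero (by simp [natCard_eq_of_ne_zero hf, Nat.card_pos.ne'])

theorem card_units_mul_le_of_irreducible {g h : k[X]} (hg : Irreducible g) (hh : h ≠ 0) :
    Nat.card (AdjoinRoot g)ˣ * Nat.card (AdjoinRoot h)ˣ ≤ Nat.card (AdjoinRoot (g * h))ˣ := by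
  by_cases hgh : g ∣ h
  · have hle : Ideal.span {g * h} ≤ Ideal.span {h} :=
      Ideal.span_singleton_le_span_singleton.mpr (dvd_mul_left h g)
    let π : AdjoinRoot (g * h) →+* AdjoinRoot h := Ideal.Quotient.factor hle
    -- the kernel `(h) / (g h)` squares to zero because `g ∣ h`
    have hker (z : AdjoinRoot (g * h)) (hz : π z = 0) : IsNilpotent z := by
      induction z using AdjoinRoot.induction_on with | ih p => ?_
      obtain ⟨t, rfl⟩ := (mk_eq_zero (f := h)).mp hz
      obtain ⟨s, rfl⟩ := hgh
      exact ⟨2, mk_eq_zero.mpr ⟨s * t * t, by ring⟩⟩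
    have hratio := π.card_units_mul_card (Ideal.Quotient.factor_surjective hle)
      fun _ => π.isUnit_of_isUnit_map_of_isNilpotent_ker
        (Ideal.Quotient.factor_surjective hle) hker
    rw [natCard_eq_of_ne_zero hh, natCard_eq_of_ne_zero (mul_ne_zero hg.ne_zero hh),
      natDegree_mul hg.ne_zero hh, pow_add, ← natCard_eq_of_ne_zero hg.ne_zero, ← mul_assoc,
      mul_comm _ (Nat.card (AdjoinRoot g))] at hratio
    have := finite_of_ne_zero hg.ne_zero
    rw [Nat.mul_right_cancel (pow_pos Nat.card_pos _) hratio]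
    exact Nat.mul_le_mul_right _ (Nat.card_le_card_of_injective _ Units.val_injective)
  · have hcop : IsCoprime (Ideal.span {g} : Ideal k[X]) (Ideal.span {h}) :=
      (Ideal.isCoprime_span_singleton_iff g h).mpr (hg.coprime_iff_not_dvd.mpr hgh)
    let e : AdjoinRoot (g * h) ≃+* AdjoinRoot g × AdjoinRoot h :=
      (Ideal.quotEquivOfEq (Ideal.span_singleton_mul_span_singleton g h).symm).trans
        (Ideal.quotientMulEquivQuotientProd _ _ hcop)
    rw [Nat.card_congr ((Units.mapEquiv e.toMulEquiv).trans MulEquiv.prodUnits).toEquiv,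
      Nat.card_prod]

theorem pow_card_sub_one_le_card_units {f : k[X]} (hf : f ≠ 0) :
    (Nat.card k - 1) ^ f.natDegree ≤ Nat.card (AdjoinRoot f)ˣ := by
  induction f using WfDvdMonoid.induction_on_irreducible with
  | zero => exact absurd rfl hf
  | unit u hu =>
    have := finite_of_ne_zero hf
    rw [natDegree_eq_zero_of_isUnit hu, pow_zero]
    exact Nat.card_pos
  | mul a i ha hi ih =>
    have : Fact (Irreducible i) := ⟨hi⟩
    have := finite_of_ne_zero hi.ne_zero
    have hi_units : (Nat.card k - 1) ^ i.natDegree ≤ Nat.card (AdjoinRoot i)ˣ := by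
      rw [Nat.card_units, natCard_eq_of_ne_zero hi.ne_zero]
      have := Nat.pow_lt_pow_left (Nat.sub_lt (Nat.card_pos (α := k)) one_pos)
        hi.natDegree_pos.ne'
      omega
    rw [natDegree_mul hi.ne_zero ha, pow_add]
    exact (Nat.mul_le_mul hi_units (ih ha)).trans (card_units_mul_le_of_irreducible hi ha)

end Field

end AdjoinRoot

namespace Matrix

open AdjoinRoot

variable {ι R : Type*} [Fintype ι] [DecidableEq ι] [CommRing R]

def IsCyclic (τ : Matrix ι ι R) : Prop :=
  ∃ v : ι → R, ∀ w, ∃ p : R[X], aeval τ p *ᵥ v = w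

def unitCentralizer (τ : Matrix ι ι R) : Set (Matrix ι ι R) :=
  {g | IsUnit g ∧ g * τ = τ * g}

variable {τ : Matrix ι ι R}

theorem IsCyclic.injective_aevalHom [Finite R] [Nontrivial R] (hτ : τ.IsCyclic) :
    Injective (aevalHom τ τ.aeval_self_charpoly) := by
  obtain ⟨v, hv⟩ := hτ
  have hsurj : Surjective fun a => aevalHom τ τ.aeval_self_charpoly a *ᵥ v := fun w => by
    obtain ⟨p, hp⟩ := hv w
    exact ⟨mk _ p, by simp only [aevalHom_mk, hp]⟩
  have hcard : Nat.card (AdjoinRoot τ.charpoly) = Nat.card (ι → R) := by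
    rw [natCard_eq_of_monic τ.charpoly_monic, charpoly_natDegree_eq_dim, Nat.card_fun,
      Nat.card_eq_fintype_card (α := ι)]
  have := finite_of_monic τ.charpoly_monic
  -- `a ↦ a(τ) v` is a surjection between sets of the same finite size
  exact fun a b hab => (hsurj.bijective_of_nat_card_le hcard.le).injective (by simp only [hab])

theorem IsCyclic.card_units_le_ncard_unitCentralizer [Finite R] [Nontrivial R]
    (hτ : τ.IsCyclic) :
    Nat.card (AdjoinRoot τ.charpoly)ˣ ≤ τ.unitCentralizer.ncard := by
  rw [← Nat.card_coe_set_eq]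
  refine Nat.card_le_card_of_injective
    (fun u => ⟨aevalHom τ τ.aeval_self_charpoly u, u.isUnit.map _, aevalHom_mul_comm _ _ _⟩)
    fun u u' h => Units.ext (hτ.injective_aevalHom (congrArg Subtype.val h))

theorem IsCyclic.le_ncard_unitCentralizer [IsLocalRing R] [Finite R] (hτ : τ.IsCyclic) :
    (Nat.card (IsLocalRing.ResidueField R) - 1) ^ Fintype.card ι * Nat.card R ^ Fintype.card ι ≤
      Nat.card (IsLocalRing.ResidueField R) ^ Fintype.card ι * τ.unitCentralizer.ncard := by
  set res := IsLocalRing.residue R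
  have : Finite (IsLocalRing.ResidueField R) := .of_surjective _ IsLocalRing.residue_surjective
  let π := AdjoinRoot.map res τ.charpoly (τ.map res).charpoly (charpoly_map τ res).dvd
  have := finite_of_monic τ.charpoly_monic
  have hlift (a) (ha : IsUnit (π a)) : IsUnit a := by
    induction a using AdjoinRoot.induction_on with | ih p => ?_
    refine (aevalHom τ _).isUnit_of_isUnit_map_of_injective hτ.injective_aevalHom ?_
    rw [← isUnit_map_iff res, aevalHom_mk, map_aeval,
      ← aevalHom_mk (τ.map res) (τ.map res).aeval_self_charpoly, ← map_mk]
    exact ha.map _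
  have hratio := π.card_units_mul_card
    (map_surjective _ _ _ _ IsLocalRing.residue_surjective) hlift
  rw [natCard_eq_of_monic (charpoly_monic _), natCard_eq_of_monic (charpoly_monic _),
    charpoly_natDegree_eq_dim, charpoly_natDegree_eq_dim] at hratio
  have hfield := pow_card_sub_one_le_card_units (charpoly_monic (τ.map res)).ne_zero
  rw [charpoly_natDegree_eq_dim] at hfield
  calc _ ≤ Nat.card (AdjoinRoot (τ.map res).charpoly)ˣ * Nat.card R ^ Fintype.card ι :=
        Nat.mul_le_mul_right _ hfield
    _ = Nat.card (AdjoinRoot τ.charpoly)ˣ *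
          Nat.card (IsLocalRing.ResidueField R) ^ Fintype.card ι := hratio.symm
    _ ≤ _ := by
        rw [mul_comm]
        exact Nat.mul_le_mul_left _ hτ.card_units_le_ncard_unitCentralizer

end Matrix

theorem IsLocalRing.ResidueField.map_bijective_of_surjective {R S : Type*} [CommRing R]
    [IsLocalRing R] [CommRing S] [IsLocalRing S] (f : R →+* S) [IsLocalHom f]
    (hf : Surjective f) : Bijective (ResidueField.map f) := by
  refine ⟨(ResidueField.map f).injective, fun y => ?_⟩
  obtain ⟨s, rfl⟩ := residue_surjective y
  obtain ⟨r, rfl⟩ := hf s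
  exact ⟨residue R r, ResidueField.map_residue f r⟩

/-- Let `o` be a discrete valuation ring with maximal ideal `p` and finite residue field of
cardinality `q`, let `q0 = p^m` (`m ≥ 1`) with `Q = [o : q0]`, and let `τ ∈ Mat_n(o/q0)` be a
cyclic matrix.  Then the centralizer group `G_τ(o/q0) = {g ∈ GL_n(o/q0) : gτ = τg}` has
cardinality at least `(1 - q⁻¹)^n · Q^n`. -/
theorem stmt_19 (n : ℕ) (o : Type*) [CommRing o] [IsDomain o] [IsDiscreteValuationRing o]
    [Fintype (IsLocalRing.ResidueField o)] (q : ℕ)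
    (hq : Fintype.card (IsLocalRing.ResidueField o) = q)
    (m : ℕ) (hm : 1 ≤ m)
    [Fintype (o ⧸ (IsLocalRing.maximalIdeal o ^ m))] (Q : ℕ)
    (hQ : Fintype.card (o ⧸ (IsLocalRing.maximalIdeal o ^ m)) = Q)
    (τ : Matrix (Fin n) (Fin n) (o ⧸ (IsLocalRing.maximalIdeal o ^ m)))
    (hτ : ∃ v : Fin n → o ⧸ (IsLocalRing.maximalIdeal o ^ m),
      ∀ w, ∃ p : Polynomial (o ⧸ (IsLocalRing.maximalIdeal o ^ m)),
        (Polynomial.aeval τ p).mulVec v = w) :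
    (1 - (q : ℝ)⁻¹) ^ n * (Q : ℝ) ^ n ≤
      (Set.ncard {g : Matrix (Fin n) (Fin n) (o ⧸ (IsLocalRing.maximalIdeal o ^ m)) |
        IsUnit g ∧ g * τ = τ * g} : ℝ) := by
  have hproper : IsLocalRing.maximalIdeal o ^ m ≠ ⊤ :=
    ne_top_of_le_ne_top (IsLocalRing.maximalIdeal.isMaximal o).ne_top
      (Ideal.pow_le_self (by omega))
  have := Ideal.Quotient.nontrivial_iff.mpr hproper
  have : IsLocalRing (o ⧸ IsLocalRing.maximalIdeal o ^ m) :=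
    .of_surjective' _ Ideal.Quotient.mk_surjective
  have : IsLocalHom (Ideal.Quotient.mk (IsLocalRing.maximalIdeal o ^ m)) :=
    .of_surjective _ Ideal.Quotient.mk_surjective
  have hres : Nat.card (IsLocalRing.ResidueField (o ⧸ IsLocalRing.maximalIdeal o ^ m)) = q := by
    rw [← hq, ← Nat.card_eq_fintype_card]
    exact (Nat.card_eq_of_bijective _ (IsLocalRing.ResidueField.map_bijective_of_surjective _
      Ideal.Quotient.mk_surjective)).symm
  have hbound := Matrix.IsCyclic.le_ncard_unitCentralizer hτ
  rw [hres, Nat.card_eq_fintype_card, hQ, Fintype.card_fin] at hbound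
  have hq_pos : 0 < q := by rw [← hq]; exact Fintype.card_pos
  have hbound' : ((q : ℝ) - 1) ^ n * (Q : ℝ) ^ n ≤ τ.unitCentralizer.ncard * (q : ℝ) ^ n := by
    have := Nat.cast_le (α := ℝ) |>.mpr hbound
    push_cast [Nat.cast_sub hq_pos] at this
    linarith
  calc (1 - (q : ℝ)⁻¹) ^ n * (Q : ℝ) ^ n = ((q : ℝ) - 1) ^ n * (Q : ℝ) ^ n / (q : ℝ) ^ n := by
        rw [mul_div_right_comm, ← div_pow, sub_div, div_self (by positivity), one_div]
    _ ≤ _ := div_le_of_le_mul₀ (by positivity) (by positivity) hbound'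
end
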